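/- arXiv:1610.06770 — 9 statements merged into one kernel-verified Lean document; each statement's English description precedes it below -/
import Mathlib

section
/- Let K be an algebraically closed field and let x1, x2 be coprime squarefree monomials in a polynomial ring over K with deg(x1) + deg(x2) ≥ d + 2, where d > 0. Suppose f1, f2 are homogeneous forms with deg(fi) = d - deg(xi), and f1·x1 + f2·x2 is a product of d linear forms. Then f1 = 0 or f2 = 0. -/
open MvPolynomial

/-- `p` is a product of `d` linear forms (each possibly zero). -/
def ProdLinear {K σ : Type*} [CommRing K] (d : ℕ) (p : MvPolynomial σ K) : Prop :=
  ∃ l : Fin d → MvPolynomial σ K, (∀ j, (l j).IsHomogeneous 1) ∧ p = ∏ j, l j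

/-!
Put `m₁ = ∏ x ∈ S1, X x`, `m₂ = ∏ y ∈ S2, X y` and `P = f1 m₁ + f2 m₂ = ∏ j, l j`. For
`x ∈ S1` and `y ∈ S2` the ideal `(X x, X y)` is prime (it is the kernel of setting `x` and `y` to
zero) and contains `P`, so it contains a linear factor `l j`, which then involves only `x` and `y`.
With only `d < |S1| + |S2| - 1` factors, a counting argument shows that either every `X x`,
`x ∈ S1`, or every `X y`, `y ∈ S2`, divides some factor, hence divides `P`. In the first case all
the variables of `S1 ∪ S2` divide the form `f2 m₂` of degree `d < |S1| + |S2|`, so `f2 = 0`.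
-/

open Finset

theorem Finsupp.card_support_le_degree {σ : Type*} (m : σ →₀ ℕ) : #m.support ≤ m.degree := by
  simpa [degree_apply] using card_nsmul_le_sum m.support m 1 fun i hi =>
    Nat.one_le_iff_ne_zero.mpr (Finsupp.mem_support_iff.mp hi)

namespace MvPolynomial

variable {R σ : Type*} [CommRing R]

noncomputable def setVarsZero (s : Set σ) : MvPolynomial σ R →ₐ[R] MvPolynomial σ R :=
  aeval (sᶜ.indicator X)

@[simp]
lemma setVarsZero_X_of_mem {s : Set σ} {i : σ} (hi : i ∈ s) :
    setVarsZero (R := R) s (X i) = 0 := by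
  simp [setVarsZero, hi]

@[simp]
lemma setVarsZero_X_of_notMem {s : Set σ} {i : σ} (hi : i ∉ s) :
    setVarsZero (R := R) s (X i) = X i := by
  simp [setVarsZero, hi]

lemma sub_setVarsZero_mem_span_X_image (s : Set σ) (p : MvPolynomial σ R) :
    p - setVarsZero s p ∈ Ideal.span (X '' s) := by
  induction p using MvPolynomial.induction_on with
  | C a => simp [setVarsZero]
  | add p q hp hq => simpa only [map_add, add_sub_add_comm] using add_mem hp hq
  | mul_X p i hp =>
    have hXi : X i - setVarsZero s (X i) ∈ Ideal.span (X '' s : Set (MvPolynomial σ R)) := by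
      by_cases hi : i ∈ s
      · simpa [hi] using Ideal.subset_span (Set.mem_image_of_mem X hi)
      · simp [hi]
    have key : p * X i - setVarsZero s (p * X i) =
        (p - setVarsZero s p) * X i + setVarsZero s p * (X i - setVarsZero s (X i)) := by
      rw [map_mul]; ring
    rw [key]
    exact add_mem (Ideal.mul_mem_right _ _ hp) (Ideal.mul_mem_left _ _ hXi)

lemma ker_setVarsZero (s : Set σ) :
    RingHom.ker (setVarsZero (R := R) s) = Ideal.span (X '' s) := by
  refine le_antisymm (fun p hp => ?_) (Ideal.span_le.mpr ?_)
  · simpa [RingHom.mem_ker.mp hp] using sub_setVarsZero_mem_span_X_image s p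
  · rintro _ ⟨i, hi, rfl⟩
    simp [hi]

theorem isPrime_span_X_image [IsDomain R] (s : Set σ) :
    (Ideal.span (X '' s : Set (MvPolynomial σ R))).IsPrime :=
  ker_setVarsZero (R := R) s ▸ RingHom.ker_isPrime _

lemma IsHomogeneous.mem_span_X_image_iff_vars_subset {l : MvPolynomial σ R}
    (hl : l.IsHomogeneous 1) {s : Finset σ} : l ∈ Ideal.span (X '' ↑s) ↔ l.vars ⊆ s := by
  have hsingle : ∀ m ∈ l.support, ∃ z, Finsupp.single z 1 = m := fun m hm => by
    rw [← Set.mem_range, Finsupp.range_single_one, Set.mem_ofPred_eq, Finsupp.degree_eq_weight_one]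
    exact hl (mem_support_iff.mp hm)
  rw [mem_ideal_span_X_image]
  constructor
  · intro h z hz
    obtain ⟨m, hm, hzm⟩ := (mem_vars_iff_mem_support z).mp hz
    obtain ⟨z', rfl⟩ := hsingle m hm
    obtain ⟨i, hi, hmi⟩ := h _ hm
    rw [Finsupp.support_single _ one_ne_zero, mem_singleton] at hzm
    rw [Finsupp.single_apply_ne_zero] at hmi
    rwa [hzm, ← hmi.1]
  · intro h m hm
    obtain ⟨z, rfl⟩ := hsingle m hm
    exact ⟨z, h ((mem_vars_iff_mem_support z).mpr ⟨_, hm, by simp⟩), by simp⟩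

lemma IsHomogeneous.eq_zero_of_forall_X_dvd {G : MvPolynomial σ R} {n : ℕ}
    (hG : G.IsHomogeneous n) {S : Finset σ} (hS : n < #S) (hdvd : ∀ z ∈ S, X z ∣ G) :
    G = 0 := by
  classical
  by_contra hG0
  obtain ⟨m, hm⟩ := support_nonempty.mpr hG0
  have hsub : S ⊆ m.support := fun z hz => by
    obtain ⟨q, rfl⟩ := hdvd z hz
    by_contra hzm
    rw [mem_support_iff, coeff_X_mul', if_neg hzm] at hm
    exact hm rfl
  have hdeg : m.degree = n := by
    rw [Finsupp.degree_eq_weight_one]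
    exact hG (mem_support_iff.mp hm)
  have := (card_le_card hsub).trans m.card_support_le_degree
  omega

lemma isHomogeneous_prod_X (T : Finset σ) :
    (∏ y ∈ T, X y : MvPolynomial σ R).IsHomogeneous #T := by
  simpa using IsHomogeneous.prod T (fun y => (X y : MvPolynomial σ R)) (fun _ => 1)
    fun y _ => isHomogeneous_X R y

lemma eq_zero_of_forall_X_dvd_mul_prod_X [IsDomain R] {S T : Finset σ} (hST : Disjoint S T)
    {n : ℕ} (hT : #T ≤ n) (hn : n < #S + #T) {f : MvPolynomial σ R}
    (hf : f.IsHomogeneous (n - #T)) (hS : ∀ x ∈ S, X x ∣ f * ∏ y ∈ T, X y) : f = 0 := by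
  classical
  have hG : (f * ∏ y ∈ T, X y).IsHomogeneous n := by
    simpa [Nat.sub_add_cancel hT] using hf.mul (isHomogeneous_prod_X T)
  have hG0 := hG.eq_zero_of_forall_X_dvd (S := S ∪ T) (by rwa [card_union_of_disjoint hST])
    fun z hz => (mem_union.mp hz).elim (hS z) fun hz => (dvd_prod_of_mem _ hz).mul_left f
  exact (mul_eq_zero.mp hG0).resolve_right (prod_ne_zero_iff.mpr fun y _ => X_ne_zero y)

end MvPolynomial

theorem Finset.forall_exists_subset_singleton_of_forall_exists_subset_pair
    {ι σ : Type*} [Fintype ι] [DecidableEq σ] {S1 S2 : Finset σ} (hdisj : Disjoint S1 S2)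
    (hcard : Fintype.card ι + 2 ≤ #S1 + #S2) (V : ι → Finset σ)
    (hpair : ∀ x ∈ S1, ∀ y ∈ S2, ∃ j, V j ⊆ {x, y}) :
    (∀ x ∈ S1, ∃ j, V j ⊆ {x}) ∨ (∀ y ∈ S2, ∃ j, V j ⊆ {y}) := by
  -- If `x₀ ∈ S1` and `y₀ ∈ S2` are counterexamples, the `|S1| + |S2| - 1 > card ι` pairs through
  -- `x₀` or `y₀` need pairwise distinct indices `j`: two of them share at most `x₀` or `y₀`.
  by_contra! h
  obtain ⟨⟨x₀, hx₀, hVx₀⟩, ⟨y₀, hy₀, hVy₀⟩⟩ := h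
  set T := {x₀} ×ˢ S2 ∪ S1 ×ˢ {y₀}
  have hT : ∀ p ∈ T, p.1 ∈ S1 ∧ p.2 ∈ S2 ∧ (p.1 = x₀ ∨ p.2 = y₀) := by
    intro p hp
    simp only [T, mem_union, mem_product, mem_singleton] at hp
    grind
  have hTcard : Fintype.card ι < #T := by
    change _ < #({x₀} ×ˢ S2 ∪ S1 ×ˢ {y₀})
    have hinter : #({x₀} ×ˢ S2 ∩ S1 ×ˢ {y₀}) ≤ 1 := card_le_one.mpr fun p hp q hq => by
      simp only [mem_inter, mem_product, mem_singleton] at hp hq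
      exact Prod.ext (hp.1.1.trans hq.1.1.symm) (hp.2.2.trans hq.2.2.symm)
    have := card_union_add_card_inter ({x₀} ×ˢ S2) (S1 ×ˢ {y₀})
    simp only [card_product, card_singleton, one_mul, mul_one] at this
    omega
  choose j hj using fun p : T => hpair p.1.1 (hT p p.2).1 p.1.2 (hT p p.2).2.1
  obtain ⟨p, q, hpq, hj_eq⟩ := Fintype.exists_ne_map_eq_of_card_lt j (by simpa using hTcard)
  have hp := hT p p.2
  have hq := hT q q.2
  have hpq' : p.1 ≠ q.1 := fun h => hpq (Subtype.ext h)
  have hdisj' := disjoint_left.mp hdisj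
  have hV : ∀ w ∈ V (j p), (w = p.1.1 ∨ w = p.1.2) ∧ (w = q.1.1 ∨ w = q.1.2) := by
    intro w hw
    have hwp := hj p hw
    have hwq := (hj_eq ▸ hj q) hw
    simp only [mem_insert, mem_singleton] at hwp hwq
    exact ⟨hwp, hwq⟩
  by_cases h1 : p.1.1 = q.1.1
  · exact hVx₀ (j p) fun w hw => mem_singleton.mpr (by grind [Prod.ext_iff])
  · exact hVy₀ (j p) fun w hw => mem_singleton.mpr (by grind [Prod.ext_iff])

theorem stmt_0_general {K σ : Type*} [Field K] (d : ℕ)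
    (S1 S2 : Finset σ) (hdisj : Disjoint S1 S2)
    (h1 : S1.card ≤ d) (h2 : S2.card ≤ d)
    (hdeg : d + 2 ≤ S1.card + S2.card)
    (f1 f2 : MvPolynomial σ K)
    (hf1 : f1.IsHomogeneous (d - S1.card)) (hf2 : f2.IsHomogeneous (d - S2.card))
    (hprod : ProdLinear d (f1 * ∏ x ∈ S1, X x + f2 * ∏ x ∈ S2, X x)) :
    f1 = 0 ∨ f2 = 0 := by
  classical
  obtain ⟨l, hl, hP⟩ := hprod
  have hpair : ∀ x ∈ S1, ∀ y ∈ S2, ∃ j, (l j).vars ⊆ {x, y} := by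
    intro x hx y hy
    let I : Ideal (MvPolynomial σ K) := Ideal.span (X '' ↑({x, y} : Finset σ))
    have : I.IsPrime := isPrime_span_X_image _
    have hX : ∀ z ∈ ({x, y} : Finset σ), X z ∈ I :=
      fun z hz => Ideal.subset_span (Set.mem_image_of_mem X hz)
    have hmem : ∏ j, l j ∈ I := by
      rw [← hP]
      exact add_mem
        (Ideal.mul_mem_left _ _ (Ideal.mem_of_dvd _ (dvd_prod_of_mem _ hx) (hX x (by simp))))
        (Ideal.mul_mem_left _ _ (Ideal.mem_of_dvd _ (dvd_prod_of_mem _ hy) (hX y (by simp))))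
    obtain ⟨j, -, hj⟩ := Ideal.IsPrime.prod_mem_iff.mp hmem
    exact ⟨j, (hl j).mem_span_X_image_iff_vars_subset.mp hj⟩
  have hdvd : ∀ x, (∃ j, (l j).vars ⊆ {x}) →
      X x ∣ f1 * ∏ x ∈ S1, X x + f2 * ∏ x ∈ S2, X x := by
    rintro x ⟨j, hj⟩
    rw [hP]
    refine dvd_trans ?_ (dvd_prod_of_mem l (mem_univ j))
    rw [← Ideal.mem_span_singleton, ← Set.image_singleton, ← coe_singleton]
    exact (hl j).mem_span_X_image_iff_vars_subset.mpr hj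
  rcases forall_exists_subset_singleton_of_forall_exists_subset_pair hdisj (by simpa using hdeg)
    (fun j => (l j).vars) hpair with hS1 | hS2
  · refine .inr (eq_zero_of_forall_X_dvd_mul_prod_X hdisj h2 (by omega) hf2 fun x hx => ?_)
    simpa using dvd_sub (hdvd x (hS1 x hx)) ((dvd_prod_of_mem _ hx).mul_left f1)
  · refine .inl (eq_zero_of_forall_X_dvd_mul_prod_X hdisj.symm h1 (by omega) hf1 fun y hy => ?_)
    simpa using dvd_sub (hdvd y (hS2 y hy)) ((dvd_prod_of_mem _ hy).mul_left f2)

theorem stmt_0 {K σ : Type*} [Field K] [IsAlgClosed K] (d : ℕ) (hd : 0 < d)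
    (S1 S2 : Finset σ) (hdisj : Disjoint S1 S2)
    (h1 : S1.card ≤ d) (h2 : S2.card ≤ d)
    (hdeg : d + 2 ≤ S1.card + S2.card)
    (f1 f2 : MvPolynomial σ K)
    (hf1 : f1.IsHomogeneous (d - S1.card)) (hf2 : f2.IsHomogeneous (d - S2.card))
    (hprod : ProdLinear d (f1 * ∏ x ∈ S1, X x + f2 * ∏ x ∈ S2, X x)) :
    f1 = 0 ∨ f2 = 0 :=
  stmt_0_general d S1 S2 hdisj h1 h2 hdeg f1 f2 hf1 hf2 hprod
end

section
/- Let K be an algebraically closed field and let l be a linear form dividing a sum Σ_i f_i·x_i, where the x_i are pairwise coprime squarefree monomials, the f_i are homogeneous forms of degree d - deg(x_i), and the two smallest degrees among the x_i satisfy deg(x_1) + deg(x_2) ≥ d + 2. Then for each index i, l divides x_i or l divides f_i. -/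
/-!
Pick a variable `y` occurring in `l` and substitute for it the solution of `l = 0`, a linear form
in the other variables. This substitution kills `l`, is the identity modulo `l`, preserves degrees
and fixes every variable but `y`, so it sends each term `f i * x i` to a form of degree `d`
divisible by the monomial `x i` with `y` removed. Two such monomials are coprime of total degree
at least `d + 1`, so no monomial of degree `d` is divisible by both: the images of the terms have
disjoint supports and, summing to zero, all vanish. Hence either `l ∣ f i`, or the substitution
sends `y` to `0`, which means `l ∣ y ∣ x i`.
-/

open Finset

theorem Finsupp.card_le_degree_of_subset_support {σ : Type*} {T : Finset σ} {μ : σ →₀ ℕ}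
    (hT : T ⊆ μ.support) : #T ≤ μ.degree :=
  calc #T = ∑ _ ∈ T, 1 := card_eq_sum_ones T
    _ ≤ ∑ x ∈ T, μ x :=
      Finset.sum_le_sum fun _ hx => Nat.one_le_iff_ne_zero.2 (Finsupp.mem_support_iff.1 (hT hx))
    _ ≤ ∑ x ∈ μ.support, μ x := sum_le_sum_of_subset hT

theorem Finset.card_add_card_le_card_sdiff_add_card_sdiff_add_card {α : Type*} [DecidableEq α]
    {s t : Finset α} (hst : Disjoint s t) (Y : Finset α) :
    #s + #t ≤ #(s \ Y) + #(t \ Y) + #Y := by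
  have hinter : #(s ∩ Y) + #(t ∩ Y) ≤ #Y := by
    rw [← card_union_of_disjoint (hst.mono inter_subset_left inter_subset_left)]
    exact card_le_card (union_subset inter_subset_right inter_subset_right)
  have := card_sdiff_add_card_inter s Y
  have := card_sdiff_add_card_inter t Y
  omega

namespace MvPolynomial

section CommSemiring

variable {R σ : Type*} [CommSemiring R]

theorem subset_support_of_prod_X_dvd {T : Finset σ} {p : MvPolynomial σ R}
    (h : ∏ x ∈ T, X x ∣ p) {μ : σ →₀ ℕ} (hμ : coeff μ p ≠ 0) : T ⊆ μ.support := by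
  obtain ⟨q, rfl⟩ := h
  have hT : (∏ x ∈ T, X x : MvPolynomial σ R) = monomial (Finsupp.indicator T fun _ _ => 1) 1 := by
    simpa using prod_X_pow (R := R) (fun _ => 1) T
  rw [hT, coeff_monomial_mul'] at hμ
  have hle : (Finsupp.indicator T fun _ _ => 1) ≤ μ := by_contra fun h => hμ (if_neg h)
  intro x hx
  have := hle x
  rw [Finsupp.indicator_of_mem hx] at this
  exact Finsupp.mem_support_iff.2 (by omega)

theorem eq_zero_of_sum_eq_zero_of_prod_X_dvd {ι : Type*} [Fintype ι] {d : ℕ}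
    (t : ι → MvPolynomial σ R) (T : ι → Finset σ) (hT : Pairwise (Function.onFun Disjoint T))
    (ht : ∀ i, (t i).IsHomogeneous d) (hdvd : ∀ i, ∏ x ∈ T i, X x ∣ t i)
    (hcard : ∀ i j, i ≠ j → d < #(T i) + #(T j)) (hsum : ∑ i, t i = 0) (i : ι) :
    t i = 0 := by
  classical
  ext μ
  rw [coeff_zero]
  by_contra hμ
  have hdeg : μ.degree = d := by
    rw [Finsupp.degree_eq_weight_one]; exact ht i hμ
  have hother : ∀ j ≠ i, coeff μ (t j) = 0 := by
    intro j hji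
    by_contra hμj
    have hsub := Finset.union_subset (subset_support_of_prod_X_dvd (hdvd i) hμ)
      (subset_support_of_prod_X_dvd (hdvd j) hμj)
    have := Finsupp.card_le_degree_of_subset_support hsub
    rw [Finset.card_union_of_disjoint (hT hji.symm)] at this
    have := hcard i j hji.symm
    omega
  apply hμ
  simpa [coeff_sum, Finset.sum_eq_single i (fun j _ hj => hother j hj)] using
    congrArg (coeff μ) hsum

end CommSemiring

section CommRing

variable {R σ : Type*} [CommRing R]

theorem dvd_sub_aeval {l : MvPolynomial σ R} {ρ : σ → MvPolynomial σ R}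
    (hρ : ∀ x, l ∣ X x - ρ x) (p : MvPolynomial σ R) : l ∣ p - aeval ρ p := by
  let π := Ideal.Quotient.mkₐ R (Ideal.span {l})
  have hπ : π = π.comp (aeval ρ) := algHom_ext fun x => by
    simpa [π, Ideal.Quotient.mk_eq_mk_iff_sub_mem, Ideal.mem_span_singleton] using hρ x
  rw [← Ideal.mem_span_singleton, ← Ideal.Quotient.mk_eq_mk_iff_sub_mem]
  exact congrArg (· p) hπ

theorem dvd_of_aeval_eq_zero {l : MvPolynomial σ R} {ρ : σ → MvPolynomial σ R}
    (hρ : ∀ x, l ∣ X x - ρ x) {p : MvPolynomial σ R} (hp : aeval ρ p = 0) : l ∣ p := by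
  simpa only [hp, sub_zero] using dvd_sub_aeval hρ p

end CommRing

section Field

variable {K σ : Type*} [Field K]

theorem IsHomogeneous.exists_coeff_single_ne_zero {l : MvPolynomial σ K} (hl : l.IsHomogeneous 1)
    (hl0 : l ≠ 0) : ∃ y, coeff (Finsupp.single y 1) l ≠ 0 := by
  obtain ⟨μ, hμ⟩ := exists_coeff_ne_zero hl0
  have hdeg : μ.degree = 1 := by rw [Finsupp.degree_eq_weight_one]; exact hl hμ
  obtain ⟨y, rfl⟩ : μ ∈ Set.range fun y => Finsupp.single y 1 := by
    rw [Finsupp.range_single_one]; exact hdeg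
  exact ⟨y, hμ⟩

theorem IsHomogeneous.aeval_update_eq_zero [DecidableEq σ] {l : MvPolynomial σ K}
    (hl : l.IsHomogeneous 1) {y : σ} (hy : coeff (Finsupp.single y 1) l ≠ 0) :
    MvPolynomial.aeval (Function.update X y (X y - C (coeff (Finsupp.single y 1) l)⁻¹ * l)) l =
      0 := by
  set c := coeff (Finsupp.single y 1) l
  have hl' : l ∈ Submodule.span K (Set.range X) := by
    rw [← homogeneousSubmodule_one_eq_span_X, mem_homogeneousSubmodule]; exact hl
  -- on linear forms, the substitution is `p ↦ p - (coeff_y p / c) • l`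
  have key := LinearMap.eqOn_span (R := K)
    (f := (MvPolynomial.aeval (Function.update X y (X y - C c⁻¹ * l))).toLinearMap)
    (g := LinearMap.id - (c⁻¹ • lcoeff K (Finsupp.single y 1)).smulRight l) ?_ hl'
  · simpa [c, hy] using key
  · rintro _ ⟨x, rfl⟩
    by_cases hx : x = y
    · subst hx; simp [smul_eq_C_mul]
    · simp [coeff_X, hx, Finsupp.single_left_inj]

/-- `ρ` moves only the variables in `Y`: none if `l = 0`, otherwise one variable of `l`. -/
theorem IsHomogeneous.exists_aeval_eq_zero {l : MvPolynomial σ K} (hl : l.IsHomogeneous 1) :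
    ∃ (ρ : σ → MvPolynomial σ K) (Y : Finset σ), #Y ≤ 1 ∧ (∀ x ∉ Y, ρ x = X x) ∧
      (∀ x, (ρ x).IsHomogeneous 1) ∧ (∀ x, l ∣ X x - ρ x) ∧ MvPolynomial.aeval ρ l = 0 := by
  classical
  by_cases hl0 : l = 0
  · exact ⟨X, ∅, by simp, fun _ _ => rfl, isHomogeneous_X K, by simp, by simp [hl0]⟩
  obtain ⟨y, hy⟩ := hl.exists_coeff_single_ne_zero hl0
  refine ⟨Function.update X y (X y - C (coeff (Finsupp.single y 1) l)⁻¹ * l), {y}, by simp,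
    fun x hx => Function.update_of_ne (by simpa using hx) _ _, fun x => ?_, fun x => ?_,
    hl.aeval_update_eq_zero hy⟩
  · by_cases hx : x = y
    · subst hx
      simpa using (isHomogeneous_X K x).sub (hl.C_mul _)
    · simpa [hx] using isHomogeneous_X K x
  · by_cases hx : x = y <;> simp [hx]

end Field

end MvPolynomial

open MvPolynomial

theorem stmt_1_general {K σ : Type*} [Field K] (d r : ℕ)
    (S : Fin r → Finset σ) (hdisj : Pairwise (Function.onFun Disjoint S))
    (hle : ∀ i, (S i).card ≤ d)
    (hdeg : ∀ i j, i ≠ j → d + 2 ≤ (S i).card + (S j).card)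
    (f : Fin r → MvPolynomial σ K) (hf : ∀ i, (f i).IsHomogeneous (d - (S i).card))
    (l : MvPolynomial σ K) (hl : l.IsHomogeneous 1)
    (hdvd : l ∣ ∑ i, f i * ∏ x ∈ S i, X x) :
    ∀ i, l ∣ ∏ x ∈ S i, X x ∨ l ∣ f i := by
  classical
  obtain ⟨ρ, Y, hY, hρX, hρhom, hρl, hρ⟩ := hl.exists_aeval_eq_zero
  set t := fun i => aeval ρ (f i * ∏ x ∈ S i, X x)
  have ht_hom : ∀ i, (t i).IsHomogeneous d := fun i => by
    have hprod : (∏ x ∈ S i, (X x : MvPolynomial σ K)).IsHomogeneous #(S i) := by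
      simpa using IsHomogeneous.prod (S i) X (fun _ => 1) fun x _ => isHomogeneous_X K x
    simpa [t, Nat.sub_add_cancel (hle i)] using ((hf i).mul hprod).aeval ρ hρhom
  have ht_dvd : ∀ i, ∏ x ∈ S i \ Y, X x ∣ t i := fun i => by
    simp only [t, map_mul, map_prod]
    refine Dvd.dvd.mul_left ?_ _
    calc ∏ x ∈ S i \ Y, X x = ∏ x ∈ S i \ Y, aeval ρ (X x) :=
          prod_congr rfl fun x hx => by rw [aeval_X, hρX x (mem_sdiff.1 hx).2]
      _ ∣ ∏ x ∈ S i, aeval ρ (X x) := prod_dvd_prod_of_subset _ _ _ sdiff_subset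
  have hcard : ∀ i j, i ≠ j → d < #(S i \ Y) + #(S j \ Y) := fun i j hij => by
    have := card_add_card_le_card_sdiff_add_card_sdiff_add_card (hdisj hij) Y
    have := hdeg i j hij
    omega
  have hsum : ∑ i, t i = 0 := by
    obtain ⟨q, hq⟩ := hdvd
    rw [← map_sum, hq, map_mul, hρ, zero_mul]
  intro i
  have hti := eq_zero_of_sum_eq_zero_of_prod_X_dvd t (fun i => S i \ Y)
    (fun i j hij => (hdisj hij).mono sdiff_subset sdiff_subset) ht_hom ht_dvd hcard hsum i
  simp only [t, map_mul, map_prod, aeval_X, mul_eq_zero, prod_eq_zero_iff] at hti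
  obtain hfi | ⟨x, hx, hρx⟩ := hti
  · exact .inr (dvd_of_aeval_eq_zero hρl hfi)
  · exact .inl ((dvd_of_aeval_eq_zero hρl (by simpa using hρx)).trans (dvd_prod_of_mem _ hx))

theorem stmt_1 {K σ : Type*} [Field K] [IsAlgClosed K] (d r : ℕ)
    (S : Fin r → Finset σ) (hdisj : Pairwise (Function.onFun Disjoint S))
    (hmono : Monotone fun i => (S i).card)
    (hle : ∀ i, (S i).card ≤ d)
    (hdeg : ∀ i j, i ≠ j → d + 2 ≤ (S i).card + (S j).card)
    (f : Fin r → MvPolynomial σ K) (hf : ∀ i, (f i).IsHomogeneous (d - (S i).card))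
    (l : MvPolynomial σ K) (hl : l.IsHomogeneous 1)
    (hdvd : l ∣ ∑ i, f i * ∏ x ∈ S i, X x) :
    ∀ i, l ∣ ∏ x ∈ S i, X x ∨ l ∣ f i :=
  stmt_1_general d r S hdisj hle hdeg f hf l hl hdvd
end

section
/- Let K be an algebraically closed field and suppose x is a variable (monomial of degree 1) dividing a sum Σ_i f_i·x_i, where the x_i are pairwise coprime squarefree monomials with deg(x_1) + deg(x_2) ≥ d + 1 (where x_1, x_2 have the two smallest degrees), and the f_i are homogeneous forms of degree d - deg(x_i). Then for each index i, x divides x_i or x divides f_i. -/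
/-!
If `v ∉ S i` but `X v ∤ f i`, pick a monomial `m` of `f i` not involving `X v`; it has
degree `d - |S i|`. The monomial `m · ∏_{S i} X` then appears in no other summand
`f j · ∏_{S j} X`: since the `S`'s are disjoint, it would force `∏_{S j} X ∣ m`, i.e.
`|S j| ≤ d - |S i|`, against `|S i| + |S j| ≥ d + 1`. So it survives in the sum with coefficient
`coeff m (f i) ≠ 0`, while it does not involve `X v` either, contradicting
`X v ∣ ∑ f j · ∏_{S j} X`.
-/

open MvPolynomial

namespace Finsupp

variable {σ : Type*}

theorem sum_single_one_apply_of_notMem {S : Finset σ} {y : σ} (hy : y ∉ S) :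
    (∑ x ∈ S, single x 1 : σ →₀ ℕ) y = 0 := by
  rw [Finset.sum_apply']
  exact Finset.sum_eq_zero fun x hx => single_eq_of_ne (ne_of_mem_of_not_mem hx hy).symm

theorem degree_sum_single_one (S : Finset σ) :
    degree (∑ x ∈ S, single x 1 : σ →₀ ℕ) = S.card := by
  simp [map_sum, degree_single]

theorem sum_single_one_le_of_le_add {S T : Finset σ} (hST : Disjoint S T) {m : σ →₀ ℕ}
    (h : ∑ x ∈ T, single x 1 ≤ m + ∑ x ∈ S, single x 1) : ∑ x ∈ T, single x 1 ≤ m := by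
  intro y
  by_cases hy : y ∈ T
  · simpa only [add_apply, sum_single_one_apply_of_notMem (Finset.disjoint_right.mp hST hy),
      add_zero] using h y
  · simp [sum_single_one_apply_of_notMem hy]

end Finsupp

namespace MvPolynomial

variable {R σ : Type*} [CommSemiring R]

theorem X_dvd_iff_forall_coeff_eq_zero {v : σ} {p : MvPolynomial σ R} :
    X v ∣ p ↔ ∀ m : σ →₀ ℕ, m v = 0 → coeff m p = 0 := by
  rw [X_dvd_iff_modMonomial_eq_zero]
  constructor
  · intro h m hm
    have hvm : ¬ Finsupp.single v 1 ≤ m := by rw [Finsupp.single_le_iff, hm]; omega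
    rw [← coeff_modMonomial_of_not_le p hvm, h, coeff_zero]
  · intro h
    ext m
    by_cases hle : Finsupp.single v 1 ≤ m
    · exact coeff_modMonomial_of_le _ hle
    · rw [coeff_modMonomial_of_not_le _ hle, coeff_zero]
      exact h m (by simpa [Finsupp.single_le_iff] using hle)

theorem prod_X_eq_monomial (S : Finset σ) :
    ∏ x ∈ S, (X x : MvPolynomial σ R) = monomial (∑ x ∈ S, Finsupp.single x 1) 1 := by
  simp [monomial_sum_one, X]

theorem coeff_add_mul_prod_X (m : σ →₀ ℕ) (p : MvPolynomial σ R) (S : Finset σ) :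
    coeff (m + ∑ x ∈ S, Finsupp.single x 1) (p * ∏ x ∈ S, X x) = coeff m p := by
  rw [prod_X_eq_monomial, coeff_mul_monomial, mul_one]

theorem coeff_mul_prod_X_of_not_le {n : σ →₀ ℕ} (p : MvPolynomial σ R) {S : Finset σ}
    (h : ¬ ∑ x ∈ S, Finsupp.single x 1 ≤ n) : coeff n (p * ∏ x ∈ S, X x) = 0 := by
  rw [prod_X_eq_monomial, coeff_mul_monomial', if_neg h]

end MvPolynomial

theorem stmt_2_general {K σ : Type*} [Field K] (d r : ℕ)
    (S : Fin r → Finset σ) (hdisj : Pairwise (Function.onFun Disjoint S))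
    (hle : ∀ i, (S i).card ≤ d)
    (hdeg : ∀ i j, i ≠ j → d + 1 ≤ (S i).card + (S j).card)
    (f : Fin r → MvPolynomial σ K) (hf : ∀ i, (f i).IsHomogeneous (d - (S i).card))
    (v : σ)
    (hdvd : (X v : MvPolynomial σ K) ∣ ∑ i, f i * ∏ x ∈ S i, X x) :
    ∀ i, (X v : MvPolynomial σ K) ∣ ∏ x ∈ S i, X x ∨ (X v : MvPolynomial σ K) ∣ f i := by
  intro i
  by_cases hvi : v ∈ S i
  · exact Or.inl (Finset.dvd_prod_of_mem _ hvi)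
  refine Or.inr (X_dvd_iff_forall_coeff_eq_zero.mpr fun m hmv => by_contra fun hm => ?_)
  have hm_deg : m.degree = d - (S i).card := by
    rw [Finsupp.degree_eq_weight_one]
    exact hf i hm
  have hcoeff : coeff (m + ∑ x ∈ S i, Finsupp.single x 1) (∑ j, f j * ∏ x ∈ S j, X x) =
      coeff m (f i) := by
    rw [coeff_sum, Finset.sum_eq_single i _ (by simp), coeff_add_mul_prod_X]
    intro j _ hji
    refine coeff_mul_prod_X_of_not_le _ fun hj => ?_
    have hSj := Finsupp.degree_mono (Finsupp.sum_single_one_le_of_le_add (hdisj hji.symm) hj)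
    rw [Finsupp.degree_sum_single_one, hm_deg] at hSj
    have := hdeg i j hji.symm
    have := hle i
    omega
  refine hm (hcoeff ▸ X_dvd_iff_forall_coeff_eq_zero.mp hdvd _ ?_)
  rw [Finsupp.add_apply, hmv, Finsupp.sum_single_one_apply_of_notMem hvi]

theorem stmt_2 {K σ : Type*} [Field K] [IsAlgClosed K] (d r : ℕ)
    (S : Fin r → Finset σ) (hdisj : Pairwise (Function.onFun Disjoint S))
    (hmono : Monotone fun i => (S i).card)
    (hle : ∀ i, (S i).card ≤ d)
    (hdeg : ∀ i j, i ≠ j → d + 1 ≤ (S i).card + (S j).card)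
    (f : Fin r → MvPolynomial σ K) (hf : ∀ i, (f i).IsHomogeneous (d - (S i).card))
    (v : σ)
    (hdvd : (X v : MvPolynomial σ K) ∣ ∑ i, f i * ∏ x ∈ S i, X x) :
    ∀ i, (X v : MvPolynomial σ K) ∣ ∏ x ∈ S i, X x ∨ (X v : MvPolynomial σ K) ∣ f i :=
  stmt_2_general d r S hdisj hle hdeg f hf v hdvd
end

section
/- Let K be an algebraically closed field. Suppose bl = f1·x1 + f2·x2 where bl is a non-squarefree product of d linear forms (i.e., some linear factor occurs with multiplicity at least 2), x1 and x2 are coprime squarefree monomials with deg(x1) + deg(x2) ≥ d + 1, and f_i are forms of degree d - deg(x_i). Then f1 = 0 or f2 = 0. -/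
/-!
Assume no `l k` vanishes (otherwise every `X i` divides `∏ l k = 0`). Setting `X i = X j = 0` for
`i ∈ S1`, `j ∈ S2` kills the right-hand side, so some `l k` involves only `X i` and `X j`. Two
factors being proportional, the `l k` have at most `d - 1` distinct variable sets. If some
`i₀ ∈ S1` and `j₀ ∈ S2` had `{i₀}`, `{j₀}` missing among them, pairing each `x ∈ S1` with `j₀`
and each `x ∈ S2` with `i₀` would give a variable set containing `x` for every `x`, injectively
away from `j₀`: at least `|S1| + |S2| - 1 ≥ d` sets. So, say, every `X i` with `i ∈ S1` is
proportional to some `l k`, hence divides `f2`, whose degree `d - |S2|` is less than `|S1|`;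
thus `f2 = 0`.
-/

open Finset in
theorem card_union_le_card_add_one_of_forall_exists_subset_pair {α : Type*} [DecidableEq α]
    {𝒱 : Finset (Finset α)} {S T : Finset α} (hempty : ∅ ∉ 𝒱)
    (hcov : ∀ i ∈ S, ∀ j ∈ T, ∃ A ∈ 𝒱, A ⊆ {i, j}) {i₀ j₀ : α} (hi₀ : i₀ ∈ S) (hj₀ : j₀ ∈ T)
    (hi₀𝒱 : {i₀} ∉ 𝒱) (hj₀𝒱 : {j₀} ∉ 𝒱) :
    #(S ∪ T) ≤ #𝒱 + 1 := by
  set p : α → α := fun x => if x ∈ S then j₀ else i₀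
  have hp : ∀ x, p x = i₀ ∨ p x = j₀ := fun x => by by_cases hx : x ∈ S <;> simp [p, hx]
  have hA : ∀ x ∈ S ∪ T, ∃ A ∈ 𝒱, x ∈ A ∧ A ⊆ {x, p x} := by
    intro x hx
    obtain ⟨A, hA𝒱, hAsub⟩ : ∃ A ∈ 𝒱, A ⊆ {x, p x} := by
      by_cases hxS : x ∈ S
      · simpa [p, hxS] using hcov x hxS j₀ hj₀
      · simpa [p, hxS, pair_comm] using hcov i₀ hi₀ x ((mem_union.1 hx).resolve_left hxS)
    refine ⟨A, hA𝒱, by_contra fun hxA => ?_, hAsub⟩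
    rw [subset_insert_iff, erase_eq_of_notMem hxA, subset_singleton_iff] at hAsub
    rcases hAsub with rfl | rfl
    · exact hempty hA𝒱
    · rcases hp x with h | h <;> rw [h] at hA𝒱
      exacts [hi₀𝒱 hA𝒱, hj₀𝒱 hA𝒱]
  choose! A hA𝒱 hxA hAsub using hA
  -- `A x = A y` with `x ≠ y` forces `x = p y` and `y = p x`, i.e. `{x, y} = {i₀, j₀}`.
  have hinj : Set.InjOn A ((S ∪ T).erase j₀ : Set α) := by
    intro x hx y hy hxy
    by_contra hne
    have hxy' : x = p y := by
      have := hAsub y (mem_of_mem_erase hy) (hxy ▸ hxA x (mem_of_mem_erase hx))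
      simpa using (mem_insert.1 this).resolve_left hne
    have hyx : y = p x := by
      have := hAsub x (mem_of_mem_erase hx) (hxy ▸ hxA y (mem_of_mem_erase hy))
      simpa using (mem_insert.1 this).resolve_left (Ne.symm hne)
    rcases hp x with h | h
    · rcases hp y with h' | h'
      · exact hne (hxy'.trans (h'.trans (h.symm.trans hyx.symm)))
      · exact ne_of_mem_erase hx (hxy'.trans h')
    · exact ne_of_mem_erase hy (hyx.trans h)
  calc #(S ∪ T) = #((S ∪ T).erase j₀) + 1 := (card_erase_add_one (mem_union_right _ hj₀)).symm
    _ ≤ #𝒱 + 1 := by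
      gcongr
      exact card_le_card_of_injOn A (fun x hx => hA𝒱 x (mem_of_mem_erase hx)) hinj

open Finset in
theorem forall_singleton_mem_or_of_forall_exists_subset_pair {α : Type*} [DecidableEq α]
    {𝒱 : Finset (Finset α)} {S T : Finset α} (hST : Disjoint S T) (hempty : ∅ ∉ 𝒱)
    (hcov : ∀ i ∈ S, ∀ j ∈ T, ∃ A ∈ 𝒱, A ⊆ {i, j}) (hcard : #𝒱 + 2 ≤ #S + #T) :
    (∀ i ∈ S, {i} ∈ 𝒱) ∨ ∀ j ∈ T, {j} ∈ 𝒱 := by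
  by_contra! h
  obtain ⟨⟨i₀, hi₀, hi₀𝒱⟩, j₀, hj₀, hj₀𝒱⟩ := h
  have := card_union_le_card_add_one_of_forall_exists_subset_pair hempty hcov hi₀ hj₀ hi₀𝒱 hj₀𝒱
  rw [card_union_of_disjoint hST] at this
  omega

open Finset in
theorem Finset.card_image_lt_of_apply_eq {ι β : Type*} [DecidableEq β] {s : Finset ι}
    {f : ι → β} {a b : ι} (ha : a ∈ s) (hb : b ∈ s) (hab : a ≠ b) (h : f a = f b) :
    #(s.image f) < #s :=
  card_image_le.lt_of_ne fun hs => hab (card_image_iff.1 hs ha hb h)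

namespace MvPolynomial

variable {R σ : Type*}

section CommSemiring

variable [CommSemiring R] {p : MvPolynomial σ R}

theorem X_dvd_iff_forall_mem_support {i : σ} :
    X i ∣ p ↔ ∀ m ∈ p.support, m i ≠ 0 := by
  classical
  constructor
  · rintro ⟨q, rfl⟩ m hm
    rw [support_X_mul, Finset.mem_map] at hm
    obtain ⟨m', -, rfl⟩ := hm
    simp
  · intro h
    rw [p.as_sum]
    exact Finset.dvd_sum fun m hm => X_dvd_monomial.2 (Or.inr (h m hm))

theorem IsHomogeneous.eq_zero_of_forall_X_dvd_s4 {n : ℕ} (hp : p.IsHomogeneous n) {s : Finset σ}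
    (hs : n < s.card) (h : ∀ i ∈ s, X i ∣ p) : p = 0 := by
  by_contra hp0
  obtain ⟨m, hm⟩ := support_nonempty.2 hp0
  have hsm : s ⊆ m.support := fun i hi =>
    Finsupp.mem_support_iff.2 (X_dvd_iff_forall_mem_support.1 (h i hi) m hm)
  have : s.card ≤ n := calc
    s.card ≤ m.support.card := Finset.card_le_card hsm
    _ ≤ ∑ i ∈ m.support, m i := by
      simpa using m.support.card_nsmul_le_sum _ 1 fun i hi =>
        Nat.one_le_iff_ne_zero.2 (Finsupp.mem_support_iff.1 hi)
    _ = n := (hp.degree_eq_sum_deg_support hm).symm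
  omega

theorem X_dvd_of_vars_subset_singleton {i : σ} (hp0 : coeff 0 p = 0) (h : p.vars ⊆ {i}) :
    X i ∣ p := by
  classical
  refine X_dvd_iff_forall_mem_support.2 fun m hm => ?_
  have hm0 : m ≠ 0 := by rintro rfl; exact mem_support_iff.1 hm hp0
  obtain ⟨v, hv⟩ := Finsupp.support_nonempty_iff.2 hm0
  obtain rfl := Finset.mem_singleton.1 (h (mem_vars_iff_mem_support v |>.2 ⟨m, hm, hv⟩))
  exact Finsupp.mem_support_iff.1 hv

theorem IsHomogeneous.vars_nonempty {n : ℕ} (hp : p.IsHomogeneous n) (hn : n ≠ 0) (hp0 : p ≠ 0) :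
    p.vars.Nonempty := by
  rw [Finset.nonempty_iff_ne_empty, Ne, vars_eq_empty_iff_eq_C,
    hp.coeff_eq_zero (by simpa using hn.symm), C_0]
  exact hp0

theorem IsHomogeneous.exists_eq_single_of_mem_support (hp : p.IsHomogeneous 1) {m : σ →₀ ℕ}
    (hm : m ∈ p.support) : ∃ v, m = Finsupp.single v 1 := by
  have hdeg : m.degree = 1 := by
    by_contra h
    exact mem_support_iff.1 hm (hp.coeff_eq_zero h)
  obtain ⟨v, hv⟩ : m ∈ Set.range fun v : σ => Finsupp.single v 1 := by
    rw [Finsupp.range_single_one]; exact hdeg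
  exact ⟨v, hv.symm⟩

theorem killCompl_X_of_notMem_range {τ : Type*} {f : σ → τ} (hf : f.Injective) {i : τ}
    (hi : i ∉ Set.range f) : killCompl (R := R) hf (X i) = 0 := by
  classical
  rw [killCompl, aeval_X, dif_neg hi]

theorem IsHomogeneous.vars_subset_of_killCompl_eq_zero (hp : p.IsHomogeneous 1) {T : Finset σ}
    (h : killCompl (Subtype.val_injective : (Subtype.val : {v // v ∉ T} → σ).Injective) p = 0) :
    p.vars ⊆ T := by
  intro v hv
  by_contra hvT
  obtain ⟨m, hm, hvm⟩ := (mem_vars_iff_mem_support v).1 hv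
  obtain ⟨w, rfl⟩ := hp.exists_eq_single_of_mem_support hm
  obtain rfl : v = w := by simpa using hvm
  have := congrArg (coeff (Finsupp.single ⟨v, hvT⟩ 1)) h
  rw [coeff_killCompl, Finsupp.mapDomain_single, coeff_zero] at this
  exact mem_support_iff.1 hm this

theorem killCompl_prod_X_eq_zero {S T : Finset σ} {i : σ} (hiS : i ∈ S) (hiT : i ∈ T) :
    killCompl (R := R) (Subtype.val_injective : (Subtype.val : {v // v ∉ T} → σ).Injective)
      (∏ x ∈ S, X x) = 0 := by
  rw [map_prod]
  exact Finset.prod_eq_zero hiS (killCompl_X_of_notMem_range _ (by simpa using hiT))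

end CommSemiring

section IsDomain

variable [CommRing R] [IsDomain R]

theorem vars_eq_of_eq_smul {p q : MvPolynomial σ R} {c : R} (h : p = c • q) (hp : p ≠ 0) :
    p.vars = q.vars := by
  have hc : c ≠ 0 := by rintro rfl; exact hp (by simpa using h)
  rw [h, smul_eq_C_mul, vars_C_mul _ hc]

theorem X_dvd_of_X_dvd_mul_prod_X_add {S T : Finset σ} (hST : Disjoint S T) {i : σ} (hi : i ∈ S)
    {f g : MvPolynomial σ R} (h : X i ∣ f * ∏ x ∈ S, X x + g * ∏ x ∈ T, X x) : X i ∣ g := by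
  rw [dvd_add_right (dvd_mul_of_dvd_right (Finset.dvd_prod_of_mem _ hi) _)] at h
  refine (X_prime.dvd_or_dvd h).resolve_right fun hT => ?_
  obtain ⟨j, hj, hij⟩ := (X_prime.dvd_finsetProd_iff _).1 hT
  exact Finset.disjoint_left.1 hST hi (X_dvd_X.1 hij ▸ hj)

theorem exists_vars_subset_pair_of_prod_eq [DecidableEq σ] {ι : Type*} {s : Finset ι}
    {l : ι → MvPolynomial σ R} (hl : ∀ k ∈ s, (l k).IsHomogeneous 1) {S T : Finset σ}
    {f g : MvPolynomial σ R} (heq : ∏ k ∈ s, l k = f * ∏ x ∈ S, X x + g * ∏ x ∈ T, X x)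
    {i j : σ} (hi : i ∈ S) (hj : j ∈ T) :
    ∃ k ∈ s, (l k).vars ⊆ {i, j} := by
  -- setting `X i = X j = 0` kills the right-hand side, and its target ring is a domain
  have h := congrArg (killCompl (R := R)
    (Subtype.val_injective : (Subtype.val : {v // v ∉ ({i, j} : Finset σ)} → σ).Injective)) heq
  rw [map_add, map_mul, map_mul, killCompl_prod_X_eq_zero hi (by simp),
    killCompl_prod_X_eq_zero hj (by simp), mul_zero, mul_zero, add_zero, map_prod,
    Finset.prod_eq_zero_iff] at h
  obtain ⟨k, hk, hk0⟩ := h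
  exact ⟨k, hk, (hl k hk).vars_subset_of_killCompl_eq_zero hk0⟩

end IsDomain

end MvPolynomial

open MvPolynomial Finset

theorem stmt_4_general {K σ : Type*} [Field K] (d : ℕ)
    (l : Fin d → MvPolynomial σ K) (hl : ∀ j, (l j).IsHomogeneous 1)
    -- `∏ l j` is non-squarefree: two of its linear factors are proportional
    (hsq : ∃ a b : Fin d, a ≠ b ∧ ∃ c : K, l a = c • l b)
    (S1 S2 : Finset σ) (hdisj : Disjoint S1 S2)
    (h1 : S1.card ≤ d) (h2 : S2.card ≤ d)
    (hdeg : d + 1 ≤ S1.card + S2.card)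
    (f1 f2 : MvPolynomial σ K)
    (hf1 : f1.IsHomogeneous (d - S1.card)) (hf2 : f2.IsHomogeneous (d - S2.card))
    (heq : (∏ j, l j) = f1 * ∏ x ∈ S1, X x + f2 * ∏ x ∈ S2, X x) :
    f1 = 0 ∨ f2 = 0 := by
  classical
  suffices key : (∀ i ∈ S1, X i ∣ ∏ k, l k) ∨ ∀ j ∈ S2, X j ∣ ∏ k, l k by
    rcases key with h | h
    · exact Or.inr (hf2.eq_zero_of_forall_X_dvd_s4 (s := S1) (by omega) fun i hi =>
        X_dvd_of_X_dvd_mul_prod_X_add hdisj hi (heq ▸ h i hi))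
    · exact Or.inl (hf1.eq_zero_of_forall_X_dvd_s4 (s := S2) (by omega) fun j hj =>
        X_dvd_of_X_dvd_mul_prod_X_add hdisj.symm hj (add_comm (f1 * _) _ ▸ heq ▸ h j hj))
  by_cases hzero : ∃ k, l k = 0
  · obtain ⟨k, hk⟩ := hzero
    simp [prod_eq_zero (mem_univ k) hk]
  push Not at hzero
  obtain ⟨a, b, hab, c, hc⟩ := hsq
  set 𝒱 := univ.image fun k => (l k).vars
  have hempty : ∅ ∉ 𝒱 := by
    simpa [𝒱, eq_comm (a := ∅), ← nonempty_iff_ne_empty] using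
      fun k => (hl k).vars_nonempty one_ne_zero (hzero k)
  have hcov : ∀ i ∈ S1, ∀ j ∈ S2, ∃ A ∈ 𝒱, A ⊆ {i, j} := fun i hi j hj => by
    obtain ⟨k, -, hk⟩ := exists_vars_subset_pair_of_prod_eq (fun k _ => hl k) heq hi hj
    exact ⟨_, mem_image_of_mem _ (mem_univ k), hk⟩
  have hcard : #𝒱 + 2 ≤ #S1 + #S2 := by
    have : #𝒱 < #(univ : Finset (Fin d)) :=
      card_image_lt_of_apply_eq (mem_univ a) (mem_univ b) hab (vars_eq_of_eq_smul hc (hzero a))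
    rw [card_univ, Fintype.card_fin] at this
    omega
  refine (forall_singleton_mem_or_of_forall_exists_subset_pair hdisj hempty hcov hcard).imp
    ?_ ?_ <;>
  · intro h i hi
    obtain ⟨k, -, hk⟩ := mem_image.1 (h i hi)
    exact (X_dvd_of_vars_subset_singleton ((hl k).coeff_eq_zero (by simp)) hk.subset).trans
      (dvd_prod_of_mem _ (mem_univ k))

theorem stmt_4 {K σ : Type*} [Field K] [IsAlgClosed K] (d : ℕ)
    (l : Fin d → MvPolynomial σ K) (hl : ∀ j, (l j).IsHomogeneous 1)
    -- `∏ l j` is non-squarefree: two of its linear factors are proportional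
    (hsq : ∃ a b : Fin d, a ≠ b ∧ ∃ c : K, l a = c • l b)
    (S1 S2 : Finset σ) (hdisj : Disjoint S1 S2)
    (h1 : S1.card ≤ d) (h2 : S2.card ≤ d)
    (hdeg : d + 1 ≤ S1.card + S2.card)
    (f1 f2 : MvPolynomial σ K)
    (hf1 : f1.IsHomogeneous (d - S1.card)) (hf2 : f2.IsHomogeneous (d - S2.card))
    (heq : (∏ j, l j) = f1 * ∏ x ∈ S1, X x + f2 * ∏ x ∈ S2, X x) :
    f1 = 0 ∨ f2 = 0 :=
  stmt_4_general d l hl hsq S1 S2 hdisj h1 h2 hdeg f1 f2 hf1 hf2 heq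
end

section
/- If deg(x1) + deg(x2) = d + 1 and x_1, x_2 are variables dividing the coprime squarefree monomials x1, x2 respectively, then setting f1 = x2/x_2 and f2 = x1/x_1 yields f1·x1 + f2·x2 = (x_1 + x_2)·(x1/x_1)·(x2/x_2), which is a product of d linear forms with both f1 and f2 nonzero. Hence the degree bound d+2 in the two-term vanishing statement cannot be improved to d+1. -/
open MvPolynomial

namespace ProdLinear

variable {K σ : Type*} [CommRing K]

lemma of_isHomogeneous_one {p : MvPolynomial σ K} (hp : p.IsHomogeneous 1) :
    ProdLinear 1 p :=
  ⟨fun _ => p, fun _ => hp, by simp⟩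

lemma mul {a b : ℕ} {p q : MvPolynomial σ K} (hp : ProdLinear a p) (hq : ProdLinear b q) :
    ProdLinear (a + b) (p * q) := by
  obtain ⟨l, hl, rfl⟩ := hp
  obtain ⟨m, hm, rfl⟩ := hq
  refine ⟨Fin.append l m, Fin.addCases (by simpa using hl) (by simpa using hm), ?_⟩
  simp [Fin.prod_univ_add]

lemma finset_prod {ι : Type*} (S : Finset ι) {f : ι → MvPolynomial σ K}
    (hf : ∀ i ∈ S, (f i).IsHomogeneous 1) : ProdLinear S.card (∏ i ∈ S, f i) := by
  let e := S.equivFin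
  refine ⟨fun j => f (e.symm j), fun j => hf _ (e.symm j).2, ?_⟩
  rw [← S.prod_attach f]
  exact (e.symm.prod_comp fun i => f i).symm

end ProdLinear

lemma Finset.prod_erase_mul_prod_add_prod_erase_mul_prod {R ι : Type*} [CommSemiring R]
    [DecidableEq ι] (f : ι → R) {S T : Finset ι} {a b : ι} (ha : a ∈ S) (hb : b ∈ T) :
    (∏ i ∈ T.erase b, f i) * (∏ i ∈ S, f i) + (∏ i ∈ S.erase a, f i) * (∏ i ∈ T, f i)
      = (f a + f b) * (∏ i ∈ S.erase a, f i) * (∏ i ∈ T.erase b, f i) := by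
  rw [← S.mul_prod_erase f ha, ← T.mul_prod_erase f hb]
  ring

theorem stmt_5_general {K σ : Type*} [Field K] [DecidableEq σ] (d : ℕ)
    (S1 S2 : Finset σ)
    (hdeg : S1.card + S2.card = d + 1)
    (v1 v2 : σ) (hv1 : v1 ∈ S1) (hv2 : v2 ∈ S2) :
    ((∏ x ∈ S2.erase v2, X x) * (∏ x ∈ S1, X x)
        + (∏ x ∈ S1.erase v1, X x) * (∏ x ∈ S2, X x)
      = (X v1 + X v2) * (∏ x ∈ S1.erase v1, X x)
          * (∏ x ∈ S2.erase v2, (X x : MvPolynomial σ K))) ∧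
    ProdLinear d ((∏ x ∈ S2.erase v2, X x) * (∏ x ∈ S1, X x)
        + (∏ x ∈ S1.erase v1, X x) * (∏ x ∈ S2, (X x : MvPolynomial σ K))) ∧
    (∏ x ∈ S2.erase v2, (X x : MvPolynomial σ K)) ≠ 0 ∧
    (∏ x ∈ S1.erase v1, (X x : MvPolynomial σ K)) ≠ 0 := by
  have key := Finset.prod_erase_mul_prod_add_prod_erase_mul_prod
    (X : σ → MvPolynomial σ K) hv1 hv2
  refine ⟨key, ?_, Finset.prod_ne_zero_iff.2 fun x _ => X_ne_zero x,
    Finset.prod_ne_zero_iff.2 fun x _ => X_ne_zero x⟩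
  obtain rfl : d = 1 + (S1.erase v1).card + (S2.erase v2).card := by
    rw [Finset.card_erase_of_mem hv1, Finset.card_erase_of_mem hv2]
    have := Finset.card_pos.2 ⟨v1, hv1⟩
    have := Finset.card_pos.2 ⟨v2, hv2⟩
    omega
  rw [key]
  have hlin := (isHomogeneous_X K v1).add (isHomogeneous_X K v2)
  exact ((ProdLinear.of_isHomogeneous_one hlin).mul
    (ProdLinear.finset_prod _ fun i _ => isHomogeneous_X K i)).mul
    (ProdLinear.finset_prod _ fun i _ => isHomogeneous_X K i)

theorem stmt_5 {K σ : Type*} [Field K] [DecidableEq σ] (d : ℕ)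
    (S1 S2 : Finset σ) (hdisj : Disjoint S1 S2)
    (hdeg : S1.card + S2.card = d + 1)
    (v1 v2 : σ) (hv1 : v1 ∈ S1) (hv2 : v2 ∈ S2) :
    ((∏ x ∈ S2.erase v2, X x) * (∏ x ∈ S1, X x)
        + (∏ x ∈ S1.erase v1, X x) * (∏ x ∈ S2, X x)
      = (X v1 + X v2) * (∏ x ∈ S1.erase v1, X x)
          * (∏ x ∈ S2.erase v2, (X x : MvPolynomial σ K))) ∧
    ProdLinear d ((∏ x ∈ S2.erase v2, X x) * (∏ x ∈ S1, X x)
        + (∏ x ∈ S1.erase v1, X x) * (∏ x ∈ S2, (X x : MvPolynomial σ K))) ∧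
    (∏ x ∈ S2.erase v2, (X x : MvPolynomial σ K)) ≠ 0 ∧
    (∏ x ∈ S1.erase v1, (X x : MvPolynomial σ K)) ≠ 0 :=
  stmt_5_general d S1 S2 hdeg v1 v2 hv1 hv2
end

section
/- The Fano scheme F_k(X_{r,d}) of k-planes contained in the hypersurface X_{r,d} = V(Σ_{i=1}^r Π_{j=1}^d x_{ij}) ⊂ P^{rd-1} is non-empty if and only if k < r(d-1). -/
/-!
A `k`-plane on `X_{r,d}` is an `n = k + 1`-dimensional space `V` of linear forms
`y_{ij}` with `∑ᵢ ∏ⱼ y_{ij} = 0`. Pick a point `p` at which every nonzero `y_{ij}` is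
nonzero and take second derivatives at `p`: with `C` the `rd × n` coefficient matrix
(of rank `n`), `Cᵀ H C = 0` for a block-diagonal `H` whose `r` blocks of size `d` each have
a nonsingular `2 × 2` principal minor. If no factor of the `i`-th product vanishes, the block
is the Hessian of that product at `p`; otherwise some row `C_{iJ}` vanishes and any symmetric
block supported on row and column `J` contributes nothing. Since `C` embeds `Kⁿ` as an
`H`-isotropic subspace, `2 n + rank H ≤ 2 r d`, and `rank H ≥ 2 r` gives `n ≤ r (d - 1)`.
Conversely, setting one factor of each product to zero leaves `r (d - 1)` free coordinates.
-/

open Module Submodule Finset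
open scoped Matrix

namespace Matrix

variable {K : Type*} [Field K] {l m n o : Type*}

/-- Sylvester's rank inequality. -/
theorem rank_add_rank_le_card_add_rank_mul [Fintype m] [Fintype n]
    (A : Matrix l m K) (B : Matrix m n K) :
    A.rank + B.rank ≤ Fintype.card m + (A * B).rank := by
  set f := A.mulVecLin.domRestrict (LinearMap.range B.mulVecLin)
  have hrange : (A * B).rank = finrank K (LinearMap.range f) := by
    rw [rank, mulVecLin_mul, LinearMap.range_comp, LinearMap.range_domRestrict]
  have hker : finrank K (LinearMap.ker f) ≤ finrank K (LinearMap.ker A.mulVecLin) := by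
    rw [← Submodule.finrank_map_subtype_eq]
    refine Submodule.finrank_mono ?_
    rintro _ ⟨x, hx, rfl⟩
    exact hx
  have hB := LinearMap.finrank_range_add_finrank_ker f
  have hA := LinearMap.finrank_range_add_finrank_ker A.mulVecLin
  rw [finrank_fintype_fun_eq_card] at hA
  rw [rank, rank]
  omega

theorem two_mul_rank_add_rank_le_of_transpose_mul_mul_eq_zero [Fintype m] [Fintype n]
    {C : Matrix m n K} {H : Matrix m m K} (h : Cᵀ * H * C = 0) :
    2 * C.rank + H.rank ≤ 2 * Fintype.card m := by
  have h₁ := rank_add_rank_le_card_of_mul_eq_zero (A := Cᵀ) (B := H * C)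
    (by rwa [← Matrix.mul_assoc])
  have h₂ := rank_add_rank_le_card_add_rank_mul H C
  rw [rank_transpose] at h₁
  omega

theorem card_mul_card_le_rank_blockDiagonal [Fintype m] [DecidableEq m] [Fintype n]
    [DecidableEq n] [Fintype o] [DecidableEq o] (B : o → Matrix m m K) (w : o → n → m)
    (hw : ∀ k, ((B k).submatrix (w k) (w k)).det ≠ 0) :
    Fintype.card n * Fintype.card o ≤ (blockDiagonal B).rank := by
  set e : n × o → m × o := fun t => (w t.2 t.1, t.2)
  have hsub : (blockDiagonal B).submatrix e e =
      blockDiagonal fun k => (B k).submatrix (w k) (w k) := by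
    ext ⟨s, k⟩ ⟨t, k'⟩
    by_cases hk : k = k'
    · subst hk
      simp [e, blockDiagonal_apply]
    · simp [e, blockDiagonal_apply, hk]
  have hdet : (blockDiagonal fun k => (B k).submatrix (w k) (w k)).det ≠ 0 := by
    rw [det_blockDiagonal]
    exact prod_ne_zero_iff.2 fun k _ => hw k
  calc Fintype.card n * Fintype.card o
      = (blockDiagonal fun k => (B k).submatrix (w k) (w k)).rank := by
        rw [rank_of_det_ne_zero hdet, Fintype.card_prod]
    _ ≤ (blockDiagonal B).rank := hsub ▸ rank_submatrix_le _ _ _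

theorem transpose_mul_blockDiagonal_mul [Fintype m] [Fintype o] [DecidableEq o]
    (c : o → Matrix m n K) (B : o → Matrix m m K) :
    (of fun jk : m × o => c jk.2 jk.1)ᵀ * blockDiagonal B * of (fun jk : m × o => c jk.2 jk.1) =
      ∑ k, (c k)ᵀ * B k * c k := by
  ext α β
  simp only [mul_apply, transpose_apply, of_apply, blockDiagonal_apply, Fintype.sum_prod_type,
    sum_apply, sum_mul, mul_ite, mul_zero, sum_ite_eq', mem_univ, if_true]
  rw [Finset.sum_comm]

end Matrix

theorem Derivation.leibniz_finset_prod {R A M ι : Type*} [CommSemiring R] [CommSemiring A]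
    [AddCommMonoid M] [Algebra R A] [Module A M] [Module R M] [DecidableEq ι]
    (D : Derivation R A M) (s : Finset ι) (f : ι → A) :
    D (∏ i ∈ s, f i) = ∑ i ∈ s, (∏ j ∈ s.erase i, f j) • D (f i) := by
  induction s using Finset.induction_on with
  | empty => simp
  | insert a s ha ih =>
    rw [prod_insert ha, leibniz, ih, sum_insert ha, erase_insert ha, smul_sum, add_comm]
    congr 1
    refine sum_congr rfl fun i hi => ?_
    rw [smul_smul, erase_insert_of_ne (ne_of_mem_of_not_mem hi ha).symm,
      prod_insert fun h => ha (mem_of_mem_erase h)]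

namespace MvPolynomial

section CommRing

variable {σ R : Type*} [CommRing R]

noncomputable def linearCoeffs : MvPolynomial σ R →ₗ[R] σ → R :=
  LinearMap.pi fun β => lcoeff R (Finsupp.single β 1)

@[simp] theorem linearCoeffs_apply (f : MvPolynomial σ R) (β : σ) :
    linearCoeffs f β = coeff (Finsupp.single β 1) f := rfl

theorem linearCoeffs_X [DecidableEq σ] (α : σ) :
    linearCoeffs (X α : MvPolynomial σ R) = Pi.single α 1 := by
  ext β
  simp [coeff_X, Pi.single_apply, Finsupp.single_left_inj one_ne_zero, eq_comm]

theorem IsHomogeneous.pderiv_eq_C {f : MvPolynomial σ R} (hf : f.IsHomogeneous 1) (β : σ) :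
    pderiv β f = C (linearCoeffs f β) := by
  classical
  have hf' : f ∈ span R (Set.range (X : σ → MvPolynomial σ R)) := by
    rwa [← homogeneousSubmodule_one_eq_span_X]
  clear hf
  induction hf' using span_induction with
  | mem _ h =>
    obtain ⟨α, rfl⟩ := h
    simp [pderiv_X, coeff_X, Pi.single_apply, Finsupp.single_left_inj one_ne_zero]
  | zero => simp
  | add f g _ _ hf hg => rw [map_add, hf, hg, map_add, Pi.add_apply, map_add]
  | smul a f _ hf =>
    rw [Derivation.map_smul, hf, map_smul, Pi.smul_apply, smul_eq_mul, smul_eq_C_mul, map_mul]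

noncomputable def hessianAt (p : σ → R) : MvPolynomial σ R →ₗ[R] Matrix σ σ R where
  toFun f := Matrix.of fun α β => eval p (pderiv α (pderiv β f))
  map_add' f g := by ext; simp
  map_smul' a f := by ext; simp

theorem pderiv_prod_of_isHomogeneous {ι : Type*} [DecidableEq ι] {y : ι → MvPolynomial σ R}
    (hy : ∀ j, (y j).IsHomogeneous 1) (s : Finset ι) (β : σ) :
    pderiv β (∏ j ∈ s, y j) = ∑ j ∈ s, (∏ j' ∈ s.erase j, y j') * C (linearCoeffs (y j) β) := by
  simp_rw [Derivation.leibniz_finset_prod, (hy _).pderiv_eq_C, smul_eq_mul]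

theorem exists_forall_eval_ne_zero [IsDomain R] [Infinite R] {ι : Type*} [Fintype ι]
    (f : ι → MvPolynomial σ R) :
    ∃ p : σ → R, ∀ i, f i ≠ 0 → eval p (f i) ≠ 0 := by
  classical
  have hprod : ∏ i ∈ univ.filter (f · ≠ 0), f i ≠ 0 :=
    prod_ne_zero_iff.2 fun i hi => (mem_filter.1 hi).2
  obtain ⟨p, hp⟩ : ∃ p, eval p (∏ i ∈ univ.filter (f · ≠ 0), f i) ≠ 0 := by
    by_contra! h
    exact hprod (funext fun p => by simpa using h p)
  rw [map_prod, prod_ne_zero_iff] at hp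
  exact ⟨p, fun i hi => hp i (mem_filter.2 ⟨mem_univ i, hi⟩)⟩

variable {ι : Type*} [Fintype ι] [DecidableEq ι]

noncomputable def prodHessianBlock (p : σ → R) (y : ι → MvPolynomial σ R) : Matrix ι ι R :=
  Matrix.of fun j j' => if j = j' then 0 else ∏ j'' ∈ (univ.erase j').erase j, eval p (y j'')

theorem hessianAt_prod_of_isHomogeneous {y : ι → MvPolynomial σ R} (hy : ∀ j, (y j).IsHomogeneous 1)
    (p : σ → R) :
    hessianAt p (∏ j, y j) = (Matrix.of fun j => linearCoeffs (y j))ᵀ * prodHessianBlock p y *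
      Matrix.of fun j => linearCoeffs (y j) := by
  ext α β
  simp only [hessianAt, LinearMap.coe_mk, AddHom.coe_mk, Matrix.of_apply, Matrix.mul_apply,
    Matrix.transpose_apply, pderiv_prod_of_isHomogeneous hy, map_sum, Derivation.leibniz,
    pderiv_C, smul_eq_mul, mul_zero, zero_add, eval_mul, eval_C, mul_sum, map_prod]
  refine sum_congr rfl fun j' _ => ?_
  rw [sum_mul, ← sum_erase univ (a := j') (by simp [prodHessianBlock])]
  refine sum_congr rfl fun j hj => ?_
  rw [prodHessianBlock, Matrix.of_apply, if_neg (ne_of_mem_erase hj)]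
  ring

theorem exists_hessianAt_prod_eq [IsDomain R] [Nontrivial ι] {y : ι → MvPolynomial σ R}
    (hy : ∀ j, (y j).IsHomogeneous 1) {p : σ → R} (hp : ∀ j, y j ≠ 0 → eval p (y j) ≠ 0) :
    ∃ B : Matrix ι ι R, ∃ w : Fin 2 → ι, (B.submatrix w w).det ≠ 0 ∧
      (Matrix.of fun j => linearCoeffs (y j))ᵀ * B * (Matrix.of fun j => linearCoeffs (y j)) =
        hessianAt p (∏ j, y j) := by
  by_cases h : ∃ J, y J = 0
  · obtain ⟨J, hJ⟩ := h
    obtain ⟨v, hv⟩ := exists_ne J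
    refine ⟨Matrix.single J v 1 + Matrix.single v J 1, ![J, v], ?_, ?_⟩
    · rw [Matrix.det_fin_two]
      simp [hv, hv.symm]
    · rw [prod_eq_zero (mem_univ J) hJ, map_zero]
      ext α β
      simp [Matrix.mul_apply, Matrix.single_apply, mul_add, sum_add_distrib, mul_ite, ite_and, hJ]
  · push Not at h
    obtain ⟨u, v, huv⟩ := exists_pair_ne ι
    refine ⟨prodHessianBlock p y, ![u, v], ?_, (hessianAt_prod_of_isHomogeneous hy p).symm⟩
    rw [Matrix.det_fin_two]
    simp [prodHessianBlock, huv, huv.symm, prod_ne_zero_iff, hp _ (h _)]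

end CommRing

variable {σ K : Type*} [Field K]

theorem rank_linearCoeffs_of_X_mem_span [Fintype σ] {ι : Type*} [Fintype ι]
    (y : ι → MvPolynomial σ K) (h : ∀ α, X α ∈ span K (Set.range y)) :
    (Matrix.of fun a => linearCoeffs (y a)).rank = Fintype.card σ := by
  classical
  have htop : span K (Set.range (Matrix.of fun a => linearCoeffs (y a)).row) = ⊤ := by
    change span K (Set.range fun a => linearCoeffs (y a)) = ⊤
    rw [Set.range_comp' linearCoeffs y, span_image, eq_top_iff, ← (Pi.basisFun K σ).span_eq,
      span_le]
    rintro _ ⟨α, rfl⟩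
    rw [Pi.basisFun_apply, ← linearCoeffs_X]
    exact mem_map_of_mem (h α)
  rw [Matrix.rank_eq_finrank_span_row, htop, finrank_top,
    finrank_fintype_fun_eq_card]

end MvPolynomial

open MvPolynomial

section FanoScheme

variable {K : Type*} [Field K]

theorem card_le_mul_pred_of_sum_prod_eq_zero [Infinite K] {σ : Type*} [Fintype σ] {r d : ℕ}
    (hd : 2 ≤ d) {y : Fin r → Fin d → MvPolynomial σ K} (hy : ∀ i j, (y i j).IsHomogeneous 1)
    (hspan : ∀ α, X α ∈ Submodule.span K (Set.range fun p : Fin r × Fin d => y p.1 p.2))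
    (hsum : ∑ i, ∏ j, y i j = 0) : Fintype.card σ ≤ r * (d - 1) := by
  have : Nontrivial (Fin d) := Fin.nontrivial_iff_two_le.2 hd
  obtain ⟨p, hp⟩ := exists_forall_eval_ne_zero fun ij : Fin r × Fin d => y ij.1 ij.2
  choose B w hB hBy using fun i => exists_hessianAt_prod_eq (hy i) fun j => hp (i, j)
  set C : Matrix (Fin d × Fin r) σ K := Matrix.of fun ji => linearCoeffs (y ji.2 ji.1)
  have hC : C.rank = Fintype.card σ := by
    refine rank_linearCoeffs_of_X_mem_span (fun ji : Fin d × Fin r => y ji.2 ji.1) ?_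
    have hrange : Set.range (fun ji : Fin d × Fin r => y ji.2 ji.1) =
        Set.range fun p : Fin r × Fin d => y p.1 p.2 :=
      ((Equiv.prodComm (Fin r) (Fin d)).surjective.range_comp _).symm
    exact fun α => hrange ▸ hspan α
  have hH : 2 * r ≤ (Matrix.blockDiagonal B).rank := by
    simpa using Matrix.card_mul_card_le_rank_blockDiagonal B w hB
  have hCHC : Cᵀ * Matrix.blockDiagonal B * C = 0 := by
    refine (Matrix.transpose_mul_blockDiagonal_mul
      (fun i => Matrix.of fun j => linearCoeffs (y i j)) B).trans ?_
    simp only [hBy, ← map_sum, hsum, map_zero]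
  have key := Matrix.two_mul_rank_add_rank_le_of_transpose_mul_mul_eq_zero hCHC
  rw [hC, Fintype.card_prod, Fintype.card_fin, Fintype.card_fin] at key
  rw [Nat.mul_sub_one, mul_comm]
  omega

theorem exists_sum_prod_eq_zero_of_lt {r e k : ℕ} (hk : k < r * e) :
    ∃ y : Fin r → Fin (e + 1) → MvPolynomial (Fin (k + 1)) K,
      (∀ i j, (y i j).IsHomogeneous 1) ∧
      (∀ α, X α ∈ Submodule.span K (Set.range fun p : Fin r × Fin (e + 1) => y p.1 p.2)) ∧
      ∑ i, ∏ j, y i j = 0 := by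
  obtain ⟨f⟩ : Nonempty (Fin (k + 1) ↪ Fin r × Fin e) :=
    Function.Embedding.nonempty_of_card_le (by simpa using hk)
  refine ⟨fun i => Fin.cons 0 fun j => X (Function.invFun f (i, j)), ?_, ?_, ?_⟩
  · intro i j
    cases j using Fin.cases with
    | zero => exact isHomogeneous_zero _ _ _
    | succ j => exact isHomogeneous_X _ _
  · intro α
    refine Submodule.subset_span ⟨((f α).1, (f α).2.succ), ?_⟩
    simp [Function.leftInverse_invFun f.injective α]
  · simp [Fin.prod_univ_succ]

end FanoScheme

theorem stmt_9_general {K : Type*} [Field K] [IsAlgClosed K] (r d k : ℕ) (hd : 2 < d) :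
    (∃ y : Fin r → Fin d → MvPolynomial (Fin (k + 1)) K,
      (∀ i j, (y i j).IsHomogeneous 1) ∧
      (∀ α : Fin (k + 1), (X α : MvPolynomial (Fin (k + 1)) K) ∈
        Submodule.span K (Set.range fun p : Fin r × Fin d => y p.1 p.2)) ∧
      (∑ i, ∏ j, y i j) = 0) ↔ k < r * (d - 1) := by
  constructor
  · rintro ⟨y, hy, hspan, hsum⟩
    have := card_le_mul_pred_of_sum_prod_eq_zero hd.le hy hspan hsum
    rw [Fintype.card_fin] at this
    omega
  · intro hk
    obtain ⟨e, rfl⟩ : ∃ e, d = e + 1 := ⟨d - 1, by omega⟩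
    exact exists_sum_prod_eq_zero_of_lt (by simpa using hk)

/-- A projective `k`-plane contained in `X_{r,d} ⊂ ℙ^{rd-1}` is given by linear forms
`y i j` in `k+1` variables (the pullbacks of the coordinates `x_{ij}`) which span the
full `(k+1)`-dimensional space of linear forms, such that `∑ i, ∏ j, y i j = 0`. -/
theorem stmt_9 {K : Type*} [Field K] [IsAlgClosed K] (r d k : ℕ) (hr : 1 < r) (hd : 2 < d) :
    (∃ y : Fin r → Fin d → MvPolynomial (Fin (k + 1)) K,
      (∀ i j, (y i j).IsHomogeneous 1) ∧
      (∀ α : Fin (k + 1), (X α : MvPolynomial (Fin (k + 1)) K) ∈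
        Submodule.span K (Set.range fun p : Fin r × Fin d => y p.1 p.2)) ∧
      (∑ i, ∏ j, y i j) = 0) ↔ k < r * (d - 1) :=
  stmt_9_general r d k hd
end

section
/- Let y_{ij} (1 ≤ i ≤ r, 1 ≤ j ≤ d) be linear forms in K[z_0,...,z_k] such that the nonzero y_{ij} are linearly independent. Then Σ_{i=1}^r Π_{j=1}^d y_{ij} = 0 if and only if for each i there exists j with y_{ij} = 0. -/
/-!
Since the nonzero linear forms `y i j` are linearly independent, there is a point `x` at which they
take arbitrary prescribed values. If some row `i₀` has no vanishing form, prescribe the value `1`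
on row `i₀` and `0` everywhere else: at `x` the `i₀`-th product is `1` and every other product
is `0` (as `d > 0`), so `∑ i, ∏ j, y i j` does not vanish at `x`.
-/

open MvPolynomial

theorem LinearIndependent.exists_linearMap_apply_eq {K V W ι : Type*} [Field K]
    [AddCommGroup V] [Module K V] [AddCommGroup W] [Module K W] {v : ι → V}
    (hv : LinearIndependent K v) (w : ι → W) : ∃ L : V →ₗ[K] W, ∀ i, L (v i) = w i := by
  obtain ⟨π, hπ⟩ := (Finsupp.linearCombination K v).exists_leftInverse_of_injective
    (LinearMap.ker_eq_bot.mpr hv)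
  refine ⟨Finsupp.linearCombination K w ∘ₗ π, fun i => ?_⟩
  have hπi : π (v i) = Finsupp.single i 1 := by
    simpa using LinearMap.congr_fun hπ (Finsupp.single i 1)
  simp [hπi]

namespace MvPolynomial

theorem aeval_apply_X_eq_of_isHomogeneous_one {σ R A : Type*} [CommSemiring R] [CommSemiring A]
    [Algebra R A] (L : MvPolynomial σ R →ₗ[R] A) {q : MvPolynomial σ R}
    (hq : q.IsHomogeneous 1) : aeval (fun n => L (X n)) q = L q := by
  have hq' : q ∈ Submodule.span R (Set.range X) := by
    rwa [← homogeneousSubmodule_one_eq_span_X, mem_homogeneousSubmodule]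
  refine LinearMap.eqOn_span' (f := (aeval fun n => L (X n)).toLinearMap) ?_ hq'
  rintro _ ⟨n, rfl⟩
  simp

theorem exists_eval_eq_of_linearIndependent {σ K ι : Type*} [Field K]
    {v : ι → MvPolynomial σ K} (hv : LinearIndependent K v) (hdeg : ∀ i, (v i).IsHomogeneous 1)
    (c : ι → K) : ∃ x : σ → K, ∀ i, eval x (v i) = c i := by
  obtain ⟨L, hL⟩ := hv.exists_linearMap_apply_eq c
  exact ⟨fun n => L (X n), fun i => by
    rw [← hL, ← aeval_apply_X_eq_of_isHomogeneous_one L (hdeg i), aeval_eq_eval]⟩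

end MvPolynomial

theorem stmt_11 {K : Type*} [Field K] (r d k : ℕ) (hd : 0 < d)
    (y : Fin r → Fin d → MvPolynomial (Fin (k + 1)) K)
    (hy : ∀ i j, (y i j).IsHomogeneous 1)
    (hli : LinearIndependent K
      fun p : {p : Fin r × Fin d // y p.1 p.2 ≠ 0} => y p.1.1 p.1.2) :
    (∑ i, ∏ j, y i j) = 0 ↔ ∀ i, ∃ j, y i j = 0 := by
  refine ⟨fun hsum i₀ => ?_, fun h => Finset.sum_eq_zero fun i _ =>
    let ⟨j, hj⟩ := h i; Finset.prod_eq_zero (Finset.mem_univ j) hj⟩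
  by_contra! hrow
  obtain ⟨x, hx⟩ := exists_eval_eq_of_linearIndependent hli (fun p => hy p.1.1 p.1.2)
    fun p => if p.1.1 = i₀ then 1 else 0
  have hrow_eval : ∀ j, eval x (y i₀ j) = 1 := fun j => by simpa using hx ⟨(i₀, j), hrow j⟩
  have hother_eval (i : Fin r) (hi : i ≠ i₀) : eval x (y i ⟨0, hd⟩) = 0 := by
    by_cases h0 : y i ⟨0, hd⟩ = 0
    · simp [h0]
    · simpa [hi] using hx ⟨(i, ⟨0, hd⟩), h0⟩
  have hsum_eval : ∑ i, ∏ j, eval x (y i j) = 1 := by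
    rw [Finset.sum_eq_single (f := fun i => ∏ j, eval x (y i j)) i₀
      (fun i _ hi => Finset.prod_eq_zero (Finset.mem_univ _) (hother_eval i hi))
      (absurd (Finset.mem_univ i₀))]
    simp [hrow_eval]
  simp_rw [← map_prod, ← map_sum, hsum, map_zero] at hsum_eval
  exact zero_ne_one hsum_eval
end

section
/- Property C^d_{k,1,2} holds for all d > 0 and k ≥ 0: given an equation bl = Σ_{i=1}^{k+2} f_i·x_i where bl is a product of d linear forms, the x_i are pairwise coprime squarefree monomials ordered by degree, the f_i are forms of degree d - deg(x_i), deg(x_i) + deg(x_j) ≥ d+1 whenever max(i,j) > k, and deg(x_i) + deg(x_j) ≥ d+2 whenever both i, j > k, then f_i = 0 for some i > k. -/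
/-!
Suppose `f k` and `f (k + 1)` are both nonzero and pick a monomial `m` of `f (k + 1)`. The degree
bounds force every other `S i` to stick out of `m`, so we may set one variable `z i ∈ S i \ m` to
zero for each `i ≠ k + 1`. This kills every other term while `m` survives, so the specialized
product of the `d` linear forms becomes a nonzero multiple of `∏ s ∈ S (k + 1), X s`: the
variables of `S (k + 1)` divide pairwise distinct specialized factors. Doing the same with `f k`
gives `|S k| + |S (k + 1)| ≥ d + 2` factor slots among `d` linear forms, hence two shared factors.
A shared factor `l j` becomes a multiple of `X s` (`s ∈ S (k + 1)`) in the first specialization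
and of `X t` (`t ∈ S k`) in the second, so its `X s`-coefficient must die in the second one, i.e.
`s` is the unique killed variable of `S (k + 1)`; thus at most one factor is shared.
-/

open MvPolynomial

open Function

namespace MvPolynomial

variable {K σ : Type*}

section CommSemiring

variable [CommSemiring K]

noncomputable def killVars (Z : Set σ) : MvPolynomial σ K →ₐ[K] MvPolynomial σ K :=
  aeval (Zᶜ.indicator X)

variable {Z : Set σ}

lemma killVars_X_of_mem {v : σ} (hv : v ∈ Z) : killVars (K := K) Z (X v) = 0 := by
  simp [killVars, hv]

lemma killVars_X_of_notMem {v : σ} (hv : v ∉ Z) : killVars (K := K) Z (X v) = X v := by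
  simp [killVars, hv]

lemma killVars_monomial_of_disjoint {m : σ →₀ ℕ} (hm : Disjoint (m.support : Set σ) Z)
    (a : K) : killVars Z (monomial m a) = monomial m a := by
  rw [monomial_eq, map_mul, algHom_C, Finsupp.prod, map_prod]
  congr 1
  refine Finset.prod_congr rfl fun v hv => ?_
  rw [map_pow, killVars_X_of_notMem (Set.disjoint_left.mp hm hv)]

lemma killVars_monomial_of_mem {m : σ →₀ ℕ} {v : σ} (hvm : v ∈ m.support) (hvZ : v ∈ Z)
    (a : K) : killVars Z (monomial m a) = 0 := by
  have hv : killVars Z (X v ^ m v : MvPolynomial σ K) = 0 := by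
    rw [map_pow, killVars_X_of_mem hvZ, zero_pow (Finsupp.mem_support_iff.mp hvm)]
  rw [monomial_eq, map_mul, Finsupp.prod, map_prod, Finset.prod_eq_zero hvm hv, mul_zero]

lemma coeff_killVars_of_disjoint {n : σ →₀ ℕ} (hn : Disjoint (n.support : Set σ) Z)
    (p : MvPolynomial σ K) : coeff n (killVars Z p) = coeff n p := by
  classical
  induction p using MvPolynomial.induction_on' with
  | monomial m a =>
    by_cases hm : Disjoint (m.support : Set σ) Z
    · rw [killVars_monomial_of_disjoint hm]
    · obtain ⟨v, hvm, hvZ⟩ := Set.not_disjoint_iff.mp hm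
      rw [killVars_monomial_of_mem hvm hvZ, coeff_zero, coeff_monomial, if_neg]
      rintro rfl
      exact Set.disjoint_left.mp hn hvm hvZ
  | add p q hp hq => rw [map_add, coeff_add, coeff_add, hp, hq]

lemma coeff_single_killVars {s : σ} (hs : s ∉ Z) (p : MvPolynomial σ K) :
    coeff (Finsupp.single s 1) (killVars Z p) = coeff (Finsupp.single s 1) p :=
  coeff_killVars_of_disjoint (by simpa using hs) p

lemma IsHomogeneous.killVars {p : MvPolynomial σ K} {n : ℕ} (hp : p.IsHomogeneous n)
    (Z : Set σ) :
    (killVars Z p).IsHomogeneous n := by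
  have h := hp.aeval (Zᶜ.indicator X) fun v => by
    by_cases hv : v ∈ Z
    · simp [hv, isHomogeneous_zero]
    · simpa [hv] using isHomogeneous_X K v
  rwa [one_mul] at h

lemma IsHomogeneous.card_support_le {p : MvPolynomial σ K} {n : ℕ} (hp : p.IsHomogeneous n)
    {m : σ →₀ ℕ} (hm : coeff m p ≠ 0) : m.support.card ≤ n := by
  rw [hp.degree_eq_sum_deg_support (mem_support_iff.mpr hm)]
  simpa using Finset.card_nsmul_le_sum m.support m 1 fun v hv =>
    Nat.one_le_iff_ne_zero.mpr (Finsupp.mem_support_iff.mp hv)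

lemma exists_killVars_sum_eq {ι : Type*} [Fintype ι] {S : ι → Finset σ}
    (hS : Pairwise (Disjoint on S)) (f : ι → MvPolynomial σ K) {i₀ : ι} {m : σ →₀ ℕ}
    (hm : coeff m (f i₀) ≠ 0) (hcover : ∀ i ≠ i₀, ¬ S i ⊆ m.support) :
    ∃ Z : Set σ,
      killVars Z (∑ i, f i * ∏ x ∈ S i, X x) = killVars Z (f i₀) * ∏ x ∈ S i₀, X x ∧
      killVars Z (f i₀) ≠ 0 ∧ Disjoint (S i₀ : Set σ) Z ∧
      ∀ i ≠ i₀, ((S i : Set σ) ∩ Z).Subsingleton := by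
  choose z hzS hzm using fun i (hi : i ≠ i₀) => Finset.not_subset.mp (hcover i hi)
  set Z : Set σ := Set.range fun i : {i // i ≠ i₀} => z i i.2
  have hZ : ∀ {i v}, v ∈ S i → v ∈ Z → ∃ hi : i ≠ i₀, z i hi = v := by
    rintro i v hv ⟨⟨j, hj⟩, rfl⟩
    obtain rfl : j = i := by
      by_contra hji
      exact Finset.disjoint_left.mp (hS hji) (hzS j hj) hv
    exact ⟨hj, rfl⟩
  have hdisj : Disjoint (S i₀ : Set σ) Z :=
    Set.disjoint_left.mpr fun v hv hvZ => (hZ hv hvZ).1 rfl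
  refine ⟨Z, ?_, ?_, hdisj, ?_⟩
  · rw [map_sum, Finset.sum_eq_single_of_mem i₀ (Finset.mem_univ _)]
    · rw [map_mul, map_prod]
      exact congrArg _ <| Finset.prod_congr rfl fun x hx =>
        killVars_X_of_notMem (Set.disjoint_left.mp hdisj hx)
    · intro i _ hi
      have hzZ : z i hi ∈ Z := ⟨⟨i, hi⟩, rfl⟩
      rw [map_mul, map_prod, Finset.prod_eq_zero (hzS i hi) (killVars_X_of_mem hzZ), mul_zero]
  · intro h0
    refine hm ?_
    rw [← coeff_killVars_of_disjoint ?_ (f i₀), h0, coeff_zero]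
    exact Set.disjoint_right.mpr fun v ⟨⟨i, hi⟩, hv⟩ => hv ▸ hzm i hi
  · rintro i hi v ⟨hv, hvZ⟩ w ⟨hw, hwZ⟩
    obtain ⟨-, rfl⟩ := hZ hv hvZ
    obtain ⟨-, rfl⟩ := hZ hw hwZ
    rfl

end CommSemiring

section Domain

variable [CommRing K] [IsDomain K] {q : MvPolynomial σ K} {s t : σ}

lemma IsHomogeneous.eq_C_mul_X_of_X_dvd (hq : q.IsHomogeneous 1) (h : X s ∣ q) :
    q = C (coeff (Finsupp.single s 1) q) * X s := by
  obtain ⟨r, rfl⟩ := h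
  rcases eq_or_ne r 0 with rfl | hr
  · simp
  have hdeg : r.totalDegree = 0 := by
    have := hq.totalDegree (mul_ne_zero (X_ne_zero s) hr)
    rw [totalDegree_mul_of_isDomain (X_ne_zero s) hr, totalDegree_X] at this
    omega
  rw [totalDegree_eq_zero_iff_eq_C.mp hdeg, mul_comm, coeff_C_mul, coeff_X_same, mul_one]

lemma IsHomogeneous.coeff_single_ne_zero_of_X_dvd (hq : q.IsHomogeneous 1) (hq0 : q ≠ 0)
    (h : X s ∣ q) : coeff (Finsupp.single s 1) q ≠ 0 := by
  intro hc
  rw [hq.eq_C_mul_X_of_X_dvd h, hc, C_0, zero_mul] at hq0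
  exact hq0 rfl

lemma IsHomogeneous.coeff_single_eq_zero_of_X_dvd (hq : q.IsHomogeneous 1) (h : X t ∣ q)
    (hst : s ≠ t) : coeff (Finsupp.single s 1) q = 0 := by
  classical
  rw [hq.eq_C_mul_X_of_X_dvd h, coeff_C_mul, coeff_X, if_neg, mul_zero]
  exact fun hts => hst (Finsupp.single_left_injective one_ne_zero hts).symm

def SeparatesVars {ι : Type*} (l : ι → MvPolynomial σ K) (Z : Set σ) (T : Finset σ) : Prop :=
  Disjoint (T : Set σ) Z ∧ ∃ g : T → ι, Injective g ∧
    ∀ s : T, killVars Z (l (g s)) ≠ 0 ∧ X (s : σ) ∣ killVars Z (l (g s))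

variable {ι : Type*} [Fintype ι] {l : ι → MvPolynomial σ K}

lemma separatesVars_of_killVars_prod_eq (hl : ∀ j, (l j).IsHomogeneous 1) {Z : Set σ}
    {T : Finset σ} (hTZ : Disjoint (T : Set σ) Z) {g₀ : MvPolynomial σ K} (hg₀ : g₀ ≠ 0)
    (h : killVars Z (∏ j, l j) = g₀ * ∏ s ∈ T, X s) : SeparatesVars l Z T := by
  rw [map_prod] at h
  have hne : ∀ j, killVars Z (l j) ≠ 0 := by
    have : ∏ j, killVars Z (l j) ≠ 0 := by
      rw [h]
      exact mul_ne_zero hg₀ (Finset.prod_ne_zero_iff.mpr fun s _ => X_ne_zero s)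
    exact fun j => Finset.prod_ne_zero_iff.mp this j (Finset.mem_univ j)
  have hdvd : ∀ s : T, ∃ j, X (s : σ) ∣ killVars Z (l j) := fun s => by
    obtain ⟨j, -, hj⟩ := X_prime.exists_mem_finset_dvd
      (h ▸ dvd_mul_of_dvd_right (Finset.dvd_prod_of_mem _ s.2) g₀)
    exact ⟨j, hj⟩
  choose g hg using hdvd
  refine ⟨hTZ, g, fun s s' hss' => Subtype.ext ?_, fun s => ⟨hne _, hg s⟩⟩
  by_contra hne'
  have hq := (hl (g s)).killVars Z
  exact hq.coeff_single_ne_zero_of_X_dvd (hne _) (hg s)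
    (hq.coeff_single_eq_zero_of_X_dvd (hss' ▸ hg s') hne')

lemma card_add_card_le_of_separatesVars (hl : ∀ j, (l j).IsHomogeneous 1) {Z₁ Z₂ : Set σ}
    {T₁ T₂ : Finset σ} (hT : Disjoint T₁ T₂) (h₁ : SeparatesVars l Z₁ T₁)
    (h₂ : SeparatesVars l Z₂ T₂) (hsub : ((T₁ : Set σ) ∩ Z₂).Subsingleton) :
    T₁.card + T₂.card ≤ Fintype.card ι + 1 := by
  classical
  obtain ⟨hTZ₁, g₁, hg₁, hl₁⟩ := h₁
  obtain ⟨hTZ₂, g₂, hg₂, hl₂⟩ := h₂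
  have hmem : ∀ s t, g₁ s = g₂ t → (s : σ) ∈ Z₂ := by
    intro s t hst
    by_contra hs
    have hq := (hl (g₁ s)).killVars Z₂
    refine (hl (g₁ s)).killVars Z₁ |>.coeff_single_ne_zero_of_X_dvd (hl₁ s).1 (hl₁ s).2 ?_
    rw [coeff_single_killVars (Set.disjoint_left.mp hTZ₁ s.2), ← coeff_single_killVars hs]
    exact hq.coeff_single_eq_zero_of_X_dvd (hst ▸ (hl₂ t).2)
      fun h => Finset.disjoint_left.mp hT s.2 (h ▸ t.2)
  have hinter : (Finset.univ.image g₁ ∩ Finset.univ.image g₂).card ≤ 1 := by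
    refine Finset.card_le_one.mpr fun a ha b hb => ?_
    simp only [Finset.mem_inter, Finset.mem_image, Finset.mem_univ, true_and] at ha hb
    obtain ⟨⟨s, rfl⟩, t, hst⟩ := ha
    obtain ⟨⟨s', rfl⟩, t', hst'⟩ := hb
    exact congrArg g₁ <| Subtype.ext <|
      hsub ⟨s.2, hmem s t hst.symm⟩ ⟨s'.2, hmem s' t' hst'.symm⟩
  have hunion := Finset.card_union_add_card_inter (Finset.univ.image g₁) (Finset.univ.image g₂)
  rw [Finset.card_image_of_injective _ hg₁, Finset.card_image_of_injective _ hg₂,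
    Finset.card_univ, Finset.card_univ, Fintype.card_coe, Fintype.card_coe] at hunion
  have := Finset.card_le_univ (Finset.univ.image g₁ ∪ Finset.univ.image g₂)
  omega

end Domain

end MvPolynomial

theorem stmt_14_general {K σ : Type*} [Field K] (d k : ℕ)
    (S : Fin (k + 2) → Finset σ) (hdisj : Pairwise (Function.onFun Disjoint S))
    (hle : ∀ i, (S i).card ≤ d)
    (h1 : ∀ i j : Fin (k + 2), i ≠ j → (k ≤ (i : ℕ) ∨ k ≤ (j : ℕ)) →
      d + 1 ≤ (S i).card + (S j).card)
    (h2 : ∀ i j : Fin (k + 2), i ≠ j → k ≤ (i : ℕ) → k ≤ (j : ℕ) →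
      d + 2 ≤ (S i).card + (S j).card)
    (f : Fin (k + 2) → MvPolynomial σ K)
    (hf : ∀ i, (f i).IsHomogeneous (d - (S i).card))
    (hbl : ProdLinear d (∑ i, f i * ∏ x ∈ S i, X x)) :
    ∃ i : Fin (k + 2), k ≤ (i : ℕ) ∧ f i = 0 := by
  by_contra! hf0
  obtain ⟨l, hl, hprod⟩ := hbl
  have hsep : ∀ i₀ : Fin (k + 2), k ≤ (i₀ : ℕ) → ∃ Z, SeparatesVars l Z (S i₀) ∧
      ∀ i ≠ i₀, ((S i : Set σ) ∩ Z).Subsingleton := by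
    intro i₀ hi₀
    obtain ⟨m, hm⟩ := ne_zero_iff.mp (hf0 i₀ hi₀)
    have hcover : ∀ i ≠ i₀, ¬ S i ⊆ m.support := fun i hi hsub => by
      have := (hf i₀).card_support_le hm
      have := Finset.card_le_card hsub
      have := h1 i i₀ hi (.inr hi₀)
      have := hle i₀
      omega
    obtain ⟨Z, hsum, hne, hZ, hsub⟩ := exists_killVars_sum_eq hdisj f hm hcover
    exact ⟨Z, separatesVars_of_killVars_prod_eq hl hZ hne (hprod ▸ hsum), hsub⟩
  let i₁ : Fin (k + 2) := ⟨k + 1, by omega⟩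
  let i₂ : Fin (k + 2) := ⟨k, by omega⟩
  have hi : i₁ ≠ i₂ := Fin.ne_of_val_ne (by simp [i₁, i₂])
  obtain ⟨Z₁, hsep₁, -⟩ := hsep i₁ (by simp [i₁])
  obtain ⟨Z₂, hsep₂, hsub⟩ := hsep i₂ le_rfl
  have hcard := card_add_card_le_of_separatesVars hl (hdisj hi) hsep₁ hsep₂ (hsub i₁ hi)
  rw [Fintype.card_fin] at hcard
  have := h2 i₁ i₂ hi (by simp [i₁]) le_rfl
  omega

/-- Property `C^d_{k,1,2}`: indices are `0`-based, so the `1`-based condition "`i > k`"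
becomes "`k ≤ i`". -/
theorem stmt_14 {K σ : Type*} [Field K] [IsAlgClosed K] (d k : ℕ) (hd : 0 < d)
    (S : Fin (k + 2) → Finset σ) (hdisj : Pairwise (Function.onFun Disjoint S))
    (hmono : Monotone fun i => (S i).card) (hle : ∀ i, (S i).card ≤ d)
    (h1 : ∀ i j : Fin (k + 2), i ≠ j → (k ≤ (i : ℕ) ∨ k ≤ (j : ℕ)) →
      d + 1 ≤ (S i).card + (S j).card)
    (h2 : ∀ i j : Fin (k + 2), i ≠ j → k ≤ (i : ℕ) → k ≤ (j : ℕ) →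
      d + 2 ≤ (S i).card + (S j).card)
    (f : Fin (k + 2) → MvPolynomial σ K)
    (hf : ∀ i, (f i).IsHomogeneous (d - (S i).card))
    (hbl : ProdLinear d (∑ i, f i * ∏ x ∈ S i, X x)) :
    ∃ i : Fin (k + 2), k ≤ (i : ℕ) ∧ f i = 0 :=
  stmt_14_general d k S hdisj hle h1 h2 f hf hbl
end

section
/- Fix d and m, and assume property C^d_{k,m,m+1} holds for every k ≥ 0. Then property C^d_{k,m,n} holds for every k ≥ 0 and every n > m. -/
/-!
Apply `C^d_{k+(n-m),m,m+1}` to the given equation with `k + n + 1` terms: all but the last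
`m + 1` indices are treated as "small" ones, and the stronger degree hypotheses for `k` imply
the weaker ones for `k + (n - m)`. This produces one index `i₀ > k` with `f_{i₀} = 0`;
deleting the term `i₀` leaves an equation with `k + n` terms, to which `C^d_{k,m,n}` applies.
-/

open MvPolynomial

/-- Property `C^d_{k,m,n}` (indices `0`-based, so the `1`-based "`i > k`" becomes
"`k ≤ i`"): for any equation `bl₁ + ⋯ + bl_m = ∑_{i=1}^{k+n} f_i·x_i` with the stated
degree conditions, there are `n - m` indices `i > k` with `f_i = 0`. -/
def PropCkmn (σ K : Type*) [Field K] (d k m n : ℕ) : Prop :=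
  ∀ S : Fin (k + n) → Finset σ, Pairwise (Function.onFun Disjoint S) →
    Monotone (fun i => (S i).card) →
    (∀ i, (S i).card ≤ d) →
    (∀ i j : Fin (k + n), i ≠ j → (k ≤ (i : ℕ) ∨ k ≤ (j : ℕ)) →
      d + 1 ≤ (S i).card + (S j).card) →
    (∀ i j : Fin (k + n), i ≠ j → k ≤ (i : ℕ) → k ≤ (j : ℕ) →
      d + 2 ≤ (S i).card + (S j).card) →
    ∀ bl : Fin m → MvPolynomial σ K, (∀ i, ProdLinear d (bl i)) →
    ∀ f : Fin (k + n) → MvPolynomial σ K, (∀ i, (f i).IsHomogeneous (d - (S i).card)) →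
    (∑ i, bl i) = (∑ i, f i * ∏ x ∈ S i, X x) →
    ∃ T : Finset (Fin (k + n)), T.card = n - m ∧ ∀ i ∈ T, k ≤ (i : ℕ) ∧ f i = 0

theorem Fin.val_le_succAbove {n : ℕ} (p : Fin (n + 1)) (j : Fin n) :
    (j : ℕ) ≤ p.succAbove j := by
  unfold Fin.succAbove; split <;> simp

section

variable {σ K : Type*} [Field K] {d k m : ℕ}

structure Admissible (d k : ℕ) {N : ℕ} (S : Fin N → Finset σ) : Prop where
  pairwise_disjoint : Pairwise (Function.onFun Disjoint S)
  card_mono : Monotone fun i => (S i).card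
  card_le : ∀ i, (S i).card ≤ d
  card_add_card_of_or : ∀ i j : Fin N, i ≠ j → (k ≤ (i : ℕ) ∨ k ≤ (j : ℕ)) →
    d + 1 ≤ (S i).card + (S j).card
  card_add_card : ∀ i j : Fin N, i ≠ j → k ≤ (i : ℕ) → k ≤ (j : ℕ) →
    d + 2 ≤ (S i).card + (S j).card

structure IsSolution (d : ℕ) {N : ℕ} (S : Fin N → Finset σ) (bl : Fin m → MvPolynomial σ K)
    (f : Fin N → MvPolynomial σ K) : Prop where
  prodLinear : ∀ i, ProdLinear d (bl i)
  isHomogeneous : ∀ i, (f i).IsHomogeneous (d - (S i).card)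
  sum_eq : ∑ i, bl i = ∑ i, f i * ∏ x ∈ S i, X x

theorem propCkmn_iff {n : ℕ} : PropCkmn σ K d k m n ↔
    ∀ (S : Fin (k + n) → Finset σ), Admissible d k S →
    ∀ (bl : Fin m → MvPolynomial σ K) f, IsSolution d S bl f →
    ∃ T : Finset (Fin (k + n)), T.card = n - m ∧ ∀ i ∈ T, k ≤ (i : ℕ) ∧ f i = 0 :=
  ⟨fun hC _ hS _ _ hf => hC _ hS.pairwise_disjoint hS.card_mono hS.card_le hS.card_add_card_of_or
      hS.card_add_card _ hf.prodLinear _ hf.isHomogeneous hf.sum_eq,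
    fun hC _ h₁ h₂ h₃ h₄ h₅ _ hbl _ hf heq => hC _ ⟨h₁, h₂, h₃, h₄, h₅⟩ _ _ ⟨hbl, hf, heq⟩⟩

namespace Admissible

variable {N : ℕ} {S : Fin N → Finset σ}

theorem of_le (hS : Admissible d k S) {k' : ℕ} (hk : k ≤ k') : Admissible d k' S where
  pairwise_disjoint := hS.pairwise_disjoint
  card_mono := hS.card_mono
  card_le := hS.card_le
  card_add_card_of_or i j hij hij' := hS.card_add_card_of_or i j hij (by omega)
  card_add_card i j hij hi hj := hS.card_add_card i j hij (by omega) (by omega)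

theorem comp (hS : Admissible d k S) {M : ℕ} {g : Fin M → Fin N} (hg : StrictMono g)
    (hg_le : ∀ j : Fin M, (j : ℕ) ≤ g j) : Admissible d k (S ∘ g) where
  pairwise_disjoint _ _ hij := hS.pairwise_disjoint (hg.injective.ne hij)
  card_mono _ _ hij := hS.card_mono (hg.monotone hij)
  card_le j := hS.card_le (g j)
  card_add_card_of_or i j hij hk := hS.card_add_card_of_or _ _ (hg.injective.ne hij)
    (hk.imp (·.trans (hg_le i)) (·.trans (hg_le j)))
  card_add_card i j hij hi hj := hS.card_add_card _ _ (hg.injective.ne hij)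
    (hi.trans (hg_le i)) (hj.trans (hg_le j))

end Admissible

theorem IsSolution.comp {N M : ℕ} {S : Fin N → Finset σ} {bl : Fin m → MvPolynomial σ K}
    {f : Fin N → MvPolynomial σ K} (hf : IsSolution d S bl f) {g : Fin M → Fin N}
    (hg : Function.Injective g) (hzero : ∀ i ∉ Set.range g, f i = 0) :
    IsSolution d (S ∘ g) bl (f ∘ g) where
  prodLinear := hf.prodLinear
  isHomogeneous j := hf.isHomogeneous (g j)
  sum_eq := hf.sum_eq.trans <| .symm <|
    Fintype.sum_of_injective g hg _ _ (fun i hi => by simp [hzero i hi]) fun _ => rfl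

theorem exists_eq_zero_of_propCkmn {k' N : ℕ} (hC : PropCkmn σ K d k' m (m + 1))
    (hk : k ≤ k') (hN : k' + (m + 1) = N) {S : Fin N → Finset σ} (hS : Admissible d k S)
    {bl : Fin m → MvPolynomial σ K} {f : Fin N → MvPolynomial σ K} (hf : IsSolution d S bl f) :
    ∃ i : Fin N, k' ≤ (i : ℕ) ∧ f i = 0 := by
  subst hN
  obtain ⟨T, hT, hTf⟩ := propCkmn_iff.mp hC S (hS.of_le hk) bl f hf
  obtain ⟨i, hi⟩ := Finset.card_pos.mp (by omega : 0 < T.card)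
  exact ⟨i, hTf i hi⟩

theorem PropCkmn.succ {n : ℕ} (hC : PropCkmn σ K d k m n)
    (hstep : PropCkmn σ K d (k + (n - m)) m (m + 1)) (hmn : m ≤ n) :
    PropCkmn σ K d k m (n + 1) := by
  refine propCkmn_iff.mpr fun S hS bl f hf => ?_
  obtain ⟨i₀, hi₀, hfi₀⟩ := exists_eq_zero_of_propCkmn hstep (by omega) (by omega) hS hf
  have hrange : ∀ i ∉ Set.range i₀.succAbove, f i = 0 := by
    simp [Fin.range_succAbove, hfi₀]
  obtain ⟨T, hT, hTf⟩ := propCkmn_iff.mp hC _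
    (hS.comp (Fin.strictMono_succAbove i₀) i₀.val_le_succAbove) _ _
    (hf.comp Fin.succAbove_right_injective hrange)
  refine ⟨insert i₀ (T.map i₀.succAboveEmb), ?_, ?_⟩
  · rw [Finset.card_insert_of_notMem (by simp [Fin.succAbove_ne]), Finset.card_map, hT]
    omega
  · simp only [Finset.mem_insert, Finset.mem_map, Fin.coe_succAboveEmb]
    rintro _ (rfl | ⟨j, hj, rfl⟩)
    · exact ⟨by omega, hfi₀⟩
    · exact ⟨(hTf j hj).1.trans (i₀.val_le_succAbove j), (hTf j hj).2⟩

end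

theorem stmt_15_general {K σ : Type*} [Field K] (d m : ℕ)
    (h : ∀ k, PropCkmn σ K d k m (m + 1)) :
    ∀ k n, m < n → PropCkmn σ K d k m n := by
  intro k n hn
  induction n, hn using Nat.le_induction with
  | base => exact h k
  | succ n hmn hC => exact hC.succ (h _) (by omega)

theorem stmt_15 {K σ : Type*} [Field K] [IsAlgClosed K] (d m : ℕ)
    (h : ∀ k, PropCkmn σ K d k m (m + 1)) :
    ∀ k n, m < n → PropCkmn σ K d k m n :=
  stmt_15_general d m h
end
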